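/- arXiv:1907.02570 — 6 statements merged into one kernel-verified Lean document; each statement's English description precedes it below -/
import Mathlib

section
/- If A is a quasi-attractor for a homeomorphism f of a compact metric space X, and f restricted to A has the shadowing property, then for all ε > 0 there is δ > 0 such that every δ-pseudo-orbit {x_n}_{n≥0} with x_0 in the δ-neighborhood of A is ε-shadowed by a point of A. -/
open Set Filter Topology

/-- `x` is a `δ`-pseudo-orbit of `f` (indexed by `n ≥ 0`). -/
def IsPseudoOrbit {α : Type*} [MetricSpace α] (f : α → α) (δ : ℝ) (x : ℕ → α) : Prop :=
  ∀ n : ℕ, dist (f (x n)) (x (n + 1)) < δ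

/-- `f` restricted to `A` has the shadowing property: every `δ`-pseudo-orbit contained in `A`
is `ε`-shadowed by a point of `A`. -/
def ShadowingOn {α : Type*} [MetricSpace α] (f : α → α) (A : Set α) : Prop :=
  ∀ ε : ℝ, 0 < ε → ∃ δ : ℝ, 0 < δ ∧ ∀ x : ℕ → α, (∀ n, x n ∈ A) → IsPseudoOrbit f δ x →
    ∃ y ∈ A, ∀ n : ℕ, dist (f^[n] y) (x n) < ε

/-- `A` is a quasi-attractor of `f`: a compact invariant set such that every open
neighborhood `U` of `A` contains an open set `V ⊇ A` with `cl (f '' V) ⊆ V`. -/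
def IsQuasiAttractor {α : Type*} [MetricSpace α] (f : α → α) (A : Set α) : Prop :=
  IsCompact A ∧ f '' A = A ∧
    ∀ U : Set α, IsOpen U → A ⊆ U →
      ∃ V : Set α, IsOpen V ∧ A ⊆ V ∧ V ⊆ U ∧ closure (f '' V) ⊆ V

/-- if `A` is a quasi-attractor of a homeomorphism `f` of a compact metric
space and `f` restricted to `A` has the shadowing property, then for every `ε > 0` there is
`δ > 0` such that every `δ`-pseudo-orbit starting in the `δ`-neighborhood of `A` is
`ε`-shadowed by a point of `A`. -/
theorem stmt_0 {α : Type*} [MetricSpace α] [CompactSpace α] (f : α ≃ₜ α) (A : Set α)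
    (hQA : IsQuasiAttractor f A) (hSh : ShadowingOn f A) :
    ∀ ε : ℝ, 0 < ε → ∃ δ : ℝ, 0 < δ ∧ ∀ x : ℕ → α, IsPseudoOrbit f δ x →
      x 0 ∈ Metric.thickening δ A →
      ∃ y ∈ A, ∀ n : ℕ, dist ((⇑f)^[n] y) (x n) < ε := by
  obtain ⟨hAcpt, -, hV⟩ := hQA
  intro ε hε
  obtain ⟨δ₁, hδ₁, hshad⟩ := hSh (ε / 2) (by linarith)
  -- uniform continuity of f
  have hUC := (CompactSpace.uniformContinuous_of_continuous f.continuous)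
  obtain ⟨η', hη', hη'f⟩ := Metric.uniformContinuous_iff.mp hUC (δ₁ / 3) (by linarith)
  set η : ℝ := min (min (ε / 2) (δ₁ / 3)) η' with hηdef
  have hη : 0 < η := lt_min (lt_min (by linarith) (by linarith)) hη'
  obtain ⟨V, hVopen, hAV, hVU, hclV⟩ := hV (Metric.thickening η A)
    Metric.isOpen_thickening (Metric.self_subset_thickening hη A)
  obtain ⟨r, hr, hrV⟩ := hAcpt.exists_thickening_subset_open hVopen hAV
  have hKcpt : IsCompact (closure (f '' V)) := isClosed_closure.isCompact
  obtain ⟨ρ, hρ, hρV⟩ := hKcpt.exists_thickening_subset_open hVopen hclV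
  refine ⟨min (min r ρ) (δ₁ / 3), lt_min (lt_min hr hρ) (by linarith), ?_⟩
  intro x hpo hx0
  set δ : ℝ := min (min r ρ) (δ₁ / 3)
  have hδr : δ ≤ r := le_trans (min_le_left _ _) (min_le_left _ _)
  have hδρ : δ ≤ ρ := le_trans (min_le_left _ _) (min_le_right _ _)
  have hδ3 : δ ≤ δ₁ / 3 := min_le_right _ _
  -- all points of the pseudo-orbit stay in V
  have hxV : ∀ n, x n ∈ V := by
    intro n
    induction n with
    | zero => exact hrV (Metric.thickening_mono hδr A hx0)
    | succ n ih =>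
        apply hρV
        rw [Metric.mem_thickening_iff]
        exact ⟨f (x n), subset_closure ⟨x n, ih, rfl⟩, by
          rw [dist_comm]; exact lt_of_lt_of_le (hpo n) hδρ⟩
  -- project to A
  have hproj : ∀ n, ∃ a ∈ A, dist (x n) a < η := by
    intro n
    have := hVU (hxV n)
    rw [Metric.mem_thickening_iff] at this
    exact this
  choose y hyA hyd using hproj
  have hηε : η ≤ ε / 2 := le_trans (min_le_left _ _) (min_le_left _ _)
  have hη3 : η ≤ δ₁ / 3 := le_trans (min_le_left _ _) (min_le_right _ _)
  have hηη' : η ≤ η' := min_le_right _ _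
  -- y is a δ₁-pseudo-orbit in A
  have hypo : IsPseudoOrbit f δ₁ y := by
    intro n
    have h1 : dist (f (y n)) (f (x n)) < δ₁ / 3 := by
      apply hη'f
      rw [dist_comm]
      exact lt_of_lt_of_le (hyd n) hηη'
    have h2 : dist (f (x n)) (x (n + 1)) < δ₁ / 3 := lt_of_lt_of_le (hpo n) hδ3
    have h3 : dist (x (n + 1)) (y (n + 1)) < δ₁ / 3 := lt_of_lt_of_le (hyd (n + 1)) hη3
    calc dist (f (y n)) (y (n + 1))
        ≤ dist (f (y n)) (f (x n)) + dist (f (x n)) (x (n + 1)) + dist (x (n + 1)) (y (n + 1)) :=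
          dist_triangle4 _ _ _ _
      _ < δ₁ / 3 + δ₁ / 3 + δ₁ / 3 := by linarith
      _ = δ₁ := by ring
  obtain ⟨z, hzA, hz⟩ := hshad y hyA hypo
  refine ⟨z, hzA, fun n => ?_⟩
  calc dist (f^[n] z) (x n) ≤ dist (f^[n] z) (y n) + dist (y n) (x n) := dist_triangle _ _ _
    _ < ε / 2 + ε / 2 := by
        have := hyd n
        rw [dist_comm] at this
        have := hz n
        linarith [lt_of_lt_of_le (dist_comm (x n) (y n) ▸ hyd n : dist (y n) (x n) < η) hηε]
    _ = ε := by ring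
end

section
/- If every point of a compact metric space X belongs to some quasi-attractor with shadowing for a homeomorphism f: X → X, then f has the shadowing property on X. -/
open Set Filter Topology

lemma local_shadow {α : Type*} [MetricSpace α] [CompactSpace α] (f : α ≃ₜ α)
    {A : Set α} (x₀ : α) (hxA : x₀ ∈ A) (hqa : IsQuasiAttractor f A)
    (hsh : ShadowingOn f A) {ε : ℝ} (hε : 0 < ε) :
    ∃ V : Set α, IsOpen V ∧ x₀ ∈ V ∧ ∃ δ : ℝ, 0 < δ ∧
      ∀ z : ℕ → α, z 0 ∈ V → IsPseudoOrbit (⇑f) δ z →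
        ∃ y : α, ∀ n : ℕ, dist ((⇑f)^[n] y) (z n) < ε := by
  obtain ⟨δ₀, hδ₀, hshad⟩ := hsh (ε/2) (by positivity)
  -- uniform continuity of f
  have hufc : UniformContinuous (⇑f) :=
    CompactSpace.uniformContinuous_of_continuous f.continuous
  obtain ⟨η₁, hη₁, hmod⟩ := Metric.uniformContinuous_iff.mp hufc (δ₀/4) (by positivity)
  set η : ℝ := min η₁ (min (δ₀/4) (ε/2)) with hη_def
  have hη : 0 < η := by positivity
  have hηη₁ : η ≤ η₁ := min_le_left _ _
  have hηδ₀ : η ≤ δ₀/4 := le_trans (min_le_right _ _) (min_le_left _ _)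
  have hηε : η ≤ ε/2 := le_trans (min_le_right _ _) (min_le_right _ _)
  -- the open neighborhood U of A
  set U : Set α := {z | Metric.infDist z A < η} with hU_def
  have hUopen : IsOpen U := isOpen_lt (Metric.continuous_infDist_pt A) continuous_const
  have hAU : A ⊆ U := fun z hz => by
    simp only [hU_def, mem_setOf_eq, Metric.infDist_zero_of_mem hz]; exact hη
  obtain ⟨V, hVopen, hAV, hVU, hVclo⟩ := hqa.2.2 U hUopen hAU
  -- thickening of closure (f '' V) inside V
  have hKcomp : IsCompact (closure (⇑f '' V)) := isClosed_closure.isCompact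
  obtain ⟨δ₁, hδ₁, hthick⟩ := hKcomp.exists_thickening_subset_open hVopen hVclo
  refine ⟨V, hVopen, hAV hxA, min δ₁ (δ₀/2), by positivity, ?_⟩
  intro z hz0 hpo
  -- the pseudo-orbit stays in V
  have hzV : ∀ n, z n ∈ V := by
    intro n
    induction n with
    | zero => exact hz0
    | succ n ih =>
      apply hthick
      rw [Metric.mem_thickening_iff]
      exact ⟨f (z n), subset_closure ⟨z n, ih, rfl⟩,
        by rw [dist_comm]; exact lt_of_lt_of_le (hpo n) (min_le_left _ _)⟩
  have hAne : A.Nonempty := ⟨x₀, hxA⟩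
  -- project to A
  have hproj : ∀ n, ∃ a ∈ A, dist (z n) a < η := by
    intro n
    exact (Metric.infDist_lt_iff hAne).mp (hVU (hzV n))
  choose a haA had using hproj
  -- a is a δ₀-pseudo-orbit in A
  have hapo : IsPseudoOrbit (⇑f) δ₀ (a) := by
    intro n
    have h1 : dist (f (a n)) (f (z n)) < δ₀/4 := by
      apply hmod; rw [dist_comm]; exact lt_of_lt_of_le (had n) hηη₁
    have h2 : dist (f (z n)) (z (n+1)) < δ₀/2 :=
      lt_of_lt_of_le (hpo n) (min_le_right _ _)
    have h3 : dist (z (n+1)) (a (n+1)) < δ₀/4 := lt_of_lt_of_le (had (n+1)) hηδ₀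
    calc dist (f (a n)) (a (n+1)) ≤
        dist (f (a n)) (f (z n)) + dist (f (z n)) (z (n+1)) + dist (z (n+1)) (a (n+1)) :=
          dist_triangle4 _ _ _ _
      _ < δ₀/4 + δ₀/2 + δ₀/4 := by linarith
      _ = δ₀ := by ring
  obtain ⟨y, -, hy⟩ := hshad a haA hapo
  refine ⟨y, fun n => ?_⟩
  calc dist ((⇑f)^[n] y) (z n) ≤ dist ((⇑f)^[n] y) (a n) + dist (a n) (z n) :=
        dist_triangle _ _ _
    _ < ε/2 + η := by
        have := had n; rw [dist_comm] at this; linarith [hy n]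
    _ ≤ ε := by linarith

/-- if every point of a compact metric space belongs to a quasi-attractor with
shadowing for the homeomorphism `f`, then `f` has the shadowing property. -/
theorem stmt_1 {α : Type*} [MetricSpace α] [CompactSpace α] (f : α ≃ₜ α)
    (h : ∀ x : α, ∃ A : Set α, x ∈ A ∧ IsQuasiAttractor f A ∧ ShadowingOn f A) :
    ∀ ε : ℝ, 0 < ε → ∃ δ : ℝ, 0 < δ ∧ ∀ x : ℕ → α, IsPseudoOrbit f δ x →
      ∃ y : α, ∀ n : ℕ, dist ((⇑f)^[n] y) (x n) < ε := by
  intro ε hε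
  rcases isEmpty_or_nonempty α with hemp | hne
  · exact ⟨1, one_pos, fun x _ => (IsEmpty.false (x 0)).elim⟩
  have hloc : ∀ x : α, ∃ V : Set α, IsOpen V ∧ x ∈ V ∧ ∃ δ : ℝ, 0 < δ ∧
      ∀ z : ℕ → α, z 0 ∈ V → IsPseudoOrbit (⇑f) δ z →
        ∃ y : α, ∀ n : ℕ, dist ((⇑f)^[n] y) (z n) < ε := by
    intro x
    obtain ⟨A, hxA, hqa, hsh⟩ := h x
    exact local_shadow f x hxA hqa hsh hε
  choose V hVopen hxV δ hδ hshad using hloc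
  obtain ⟨t, ht⟩ := isCompact_univ.elim_finite_subcover V hVopen
    (fun x _ => mem_iUnion.mpr ⟨x, hxV x⟩)
  obtain ⟨p⟩ := hne
  have htne : t.Nonempty := by
    obtain ⟨i, hit, -⟩ := mem_iUnion₂.mp (ht (mem_univ p))
    exact ⟨i, hit⟩
  refine ⟨t.inf' htne δ, ?_, ?_⟩
  · rw [Finset.lt_inf'_iff]; exact fun i _ => hδ i
  · intro x hpo
    obtain ⟨i, hit, hxVi⟩ := mem_iUnion₂.mp (ht (mem_univ (x 0)))
    refine hshad i x hxVi (fun n => lt_of_lt_of_le (hpo n) ?_)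
    exact Finset.inf'_le _ hit
end

section
/- If f is an orientation-preserving homeomorphism of [0,1] satisfying property P_ε for arbitrarily small ε > 0, then the fixed point set of f has no isolated points (and is totally disconnected, hence a Cantor set). -/
open Set Filter Topology

noncomputable section

/-- The space `H⁺([0,1])` of increasing (orientation-preserving) homeomorphisms of `[0,1]`,
identified with the order isomorphisms of the unit interval. -/
abbrev HI := unitInterval ≃o unitInterval

/-- `(a,b)` is an r-interval of `f`: a connected component of `[0,1] \ Fix f`
on which all forward orbits converge to the right endpoint `b`. -/
def IsRInt (f : HI) (a b : unitInterval) : Prop :=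
  a < b ∧ f a = a ∧ f b = b ∧ (∀ x ∈ Set.Ioo a b, f x ≠ x) ∧
    ∀ x ∈ Set.Ioo a b, Tendsto (fun n => (⇑f)^[n] x) atTop (nhds b)

/-- `(a,b)` is an l-interval of `f`: a connected component of `[0,1] \ Fix f`
on which all forward orbits converge to the left endpoint `a`. -/
def IsLInt (f : HI) (a b : unitInterval) : Prop :=
  a < b ∧ f a = a ∧ f b = b ∧ (∀ x ∈ Set.Ioo a b, f x ≠ x) ∧
    ∀ x ∈ Set.Ioo a b, Tendsto (fun n => (⇑f)^[n] x) atTop (nhds a)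

/-- Property `P_ε`: there are wandering intervals `(a i, b i)`, `i = 0,…,n`, ordered in `(0,1)`,
alternately r-intervals (even index) and l-intervals (odd index), with all gaps smaller
than `ε`. -/
def PProp (f : HI) (ε : ℝ) : Prop :=
  ∃ (n : ℕ) (a b : Fin (n + 1) → unitInterval),
    0 < a 0 ∧
    (∀ i, a i < b i) ∧
    (∀ i : Fin n, b i.castSucc < a i.succ) ∧
    b (Fin.last n) < 1 ∧
    (∀ i : Fin (n + 1), Even (i : ℕ) → IsRInt f (a i) (b i)) ∧
    (∀ i : Fin (n + 1), ¬ Even (i : ℕ) → IsLInt f (a i) (b i)) ∧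
    (a 0 : ℝ) < ε ∧ 1 - (b (Fin.last n) : ℝ) < ε ∧
    ∀ i : Fin n, (a i.succ : ℝ) - (b i.castSucc : ℝ) < ε

/-- The `C⁰` distance on `H⁺([0,1])`. -/
def dC0 (f g : HI) : ℝ :=
  ⨆ x : unitInterval, max (dist (f x) (g x)) (dist (f.symm x) (g.symm x))

/-! Under `P_ε` every fixed point lies in a closed gap `[c, d]` of length `< ε` whose endpoints are
fixed, and unless `d = 1` a wandering interval starts at `d`. Taking the endpoint of the gap other
than `x` gives a fixed point `ε`-close to `x`; and an interval of fixed points starting in the gap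
cannot leave it past `d`, so its length is `< ε`. Letting `ε → 0` gives both claims. -/

theorem le_or_le_or_exists_mem_Icc_of_forall_notMem_Ioo {α : Type*} [LinearOrder α] {n : ℕ}
    {a b : Fin (n + 1) → α} {x : α} (hx : ∀ i, x ∉ Ioo (a i) (b i)) :
    x ≤ a 0 ∨ b (Fin.last n) ≤ x ∨ ∃ i : Fin n, b i.castSucc ≤ x ∧ x ≤ a i.succ := by
  induction n with
  | zero =>
    refine (le_or_gt x (a 0)).imp id fun hax => Or.inl ?_
    exact not_lt.1 fun hxb => hx 0 ⟨hax, hxb⟩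
  | succ n ih =>
    rcases ih (a := fun i => a i.castSucc) (b := fun i => b i.castSucc) (fun i => hx _) with
      h | h | ⟨i, h⟩
    · exact Or.inl h
    · rcases le_or_gt x (a (Fin.last (n + 1))) with hxa | hax
      · exact Or.inr (Or.inr ⟨Fin.last n, h, by rwa [Fin.succ_last]⟩)
      · exact Or.inr (Or.inl (not_lt.1 fun hxb => hx _ ⟨hax, hxb⟩))
    · exact Or.inr (Or.inr ⟨i.castSucc, by rwa [Fin.succ_castSucc]⟩)

theorem isTotallyDisconnected_of_forall_not_Icc_subset {α : Type*} [LinearOrder α]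
    [TopologicalSpace α] [OrderClosedTopology α] {s : Set α}
    (hs : ∀ u v, u < v → ¬ Icc u v ⊆ s) : IsTotallyDisconnected s := by
  intro t hts ht u hu v hv
  by_contra hne
  rcases lt_or_gt_of_ne hne with huv | hvu
  · exact hs u v huv ((ht.ordConnected.out hu hv).trans hts)
  · exact hs v u hvu ((ht.ordConnected.out hv hu).trans hts)

namespace PProp

variable {f : HI} {ε : ℝ}

theorem exists_gap (hp : PProp f ε) {x : unitInterval} (hx : f x = x) :
    ∃ c d : unitInterval, f c = c ∧ f d = d ∧ c < d ∧ c ≤ x ∧ x ≤ d ∧ (d : ℝ) - c < ε ∧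
      (d = 1 ∨ ∃ e, d < e ∧ ∀ z ∈ Ioo d e, f z ≠ z) := by
  obtain ⟨n, a, b, ha0, hab, hba, hbn, hR, hL, hε0, hε1, hεgap⟩ := hp
  have hwander : ∀ i, f (a i) = a i ∧ f (b i) = b i ∧ ∀ z ∈ Ioo (a i) (b i), f z ≠ z := by
    intro i
    by_cases he : Even (i : ℕ)
    · obtain ⟨-, ha, hb, hfree, -⟩ := hR i he
      exact ⟨ha, hb, hfree⟩
    · obtain ⟨-, ha, hb, hfree, -⟩ := hL i he
      exact ⟨ha, hb, hfree⟩
  have hnext : ∀ i, ∃ e, a i < e ∧ ∀ z ∈ Ioo (a i) e, f z ≠ z :=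
    fun i => ⟨b i, hab i, (hwander i).2.2⟩
  rcases le_or_le_or_exists_mem_Icc_of_forall_notMem_Ioo (a := a) (b := b) (x := x)
      (fun i hxi => (hwander i).2.2 x hxi hx) with hxa | hbx | ⟨i, hbx, hxa⟩
  · exact ⟨0, a 0, f.map_bot, (hwander 0).1, ha0, x.2.1, hxa, by simpa using hε0,
      Or.inr (hnext 0)⟩
  · exact ⟨b (Fin.last n), 1, (hwander _).2.1, f.map_top, hbn, hbx, unitInterval.le_one',
      hε1, Or.inl rfl⟩
  · exact ⟨b i.castSucc, a i.succ, (hwander _).2.1, (hwander _).1, hba i, hbx, hxa, hεgap i,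
      Or.inr (hnext _)⟩

theorem exists_fixed_ne_dist_lt (hp : PProp f ε) {x : unitInterval} (hx : f x = x) :
    ∃ y, f y = y ∧ y ≠ x ∧ dist x y < ε := by
  obtain ⟨c, d, hc, hd, hcd, hcx, hxd, hgap, -⟩ := hp.exists_gap hx
  have hcd' : (c : ℝ) < d := hcd
  have hcx' : (c : ℝ) ≤ x := hcx
  have hxd' : (x : ℝ) ≤ d := hxd
  rcases eq_or_ne c x with rfl | hne
  · refine ⟨d, hd, hcd.ne', ?_⟩
    rw [Subtype.dist_eq, Real.dist_eq, abs_sub_comm, abs_of_pos (by linarith)]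
    exact hgap
  · refine ⟨c, hc, hne, ?_⟩
    rw [Subtype.dist_eq, Real.dist_eq, abs_of_nonneg (by linarith)]
    linarith

theorem sub_lt_of_Icc_subset {u v : unitInterval} (hp : PProp f ε) (huv : u < v)
    (hfix : Icc u v ⊆ {x | f x = x}) : (v : ℝ) - u < ε := by
  obtain ⟨c, d, -, -, -, hcu, hud, hgap, hright⟩ := hp.exists_gap (hfix (left_mem_Icc.2 huv.le))
  rcases le_or_gt v d with hvd | hdv
  · have hcu' : (c : ℝ) ≤ u := hcu
    have hvd' : (v : ℝ) ≤ d := hvd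
    linarith
  · rcases hright with rfl | ⟨e, hde, hfree⟩
    · exact absurd unitInterval.le_one' hdv.not_ge
    · obtain ⟨z, hdz, hz⟩ := exists_between (lt_min hde hdv)
      exact absurd (hfix ⟨hud.trans hdz.le, (hz.trans_le (min_le_right _ _)).le⟩)
        (hfree z ⟨hdz, hz.trans_le (min_le_left _ _)⟩)

end PProp

/-- if `f ∈ H⁺([0,1])` satisfies `P_ε` for arbitrarily small `ε > 0`, then
`Fix f` has no isolated points and is totally disconnected (hence a Cantor set). -/
theorem stmt_2 (f : HI) (h : ∀ ε : ℝ, 0 < ε → ∃ ε' : ℝ, 0 < ε' ∧ ε' ≤ ε ∧ PProp f ε') :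
    (∀ x : unitInterval, f x = x → x ∈ closure {y : unitInterval | f y = y ∧ y ≠ x}) ∧
      IsTotallyDisconnected {x : unitInterval | f x = x} := by
  constructor
  · intro x hx
    refine Metric.mem_closure_iff.2 fun ε hε => ?_
    obtain ⟨ε', -, hε', hp⟩ := h ε hε
    obtain ⟨y, hy, hne, hdist⟩ := hp.exists_fixed_ne_dist_lt hx
    exact ⟨y, ⟨hy, hne⟩, hdist.trans_le hε'⟩
  · refine isTotallyDisconnected_of_forall_not_Icc_subset fun u v huv hfix => ?_
    have hlen : (0 : ℝ) < v - u := sub_pos.2 huv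
    obtain ⟨ε', -, hε', hp⟩ := h _ hlen
    exact (hp.sub_lt_of_Icc_subset huv hfix).not_ge hε'
end
end

section
/- For each ε > 0, the set U_ε of orientation-preserving homeomorphisms of [0,1] satisfying property P_ε is dense in H⁺([0,1]): any increasing homeomorphism of [0,1] can be C⁰-approximated by one satisfying P_ε, obtained by exploding finitely many fixed points into small wandering intervals. -/
open Set Filter Topology

noncomputable section

/-! Put `d = f - id`. On a fine grid, cut `(0,1)` into intervals `[A i, B i]`, consecutive
ones a grid step apart, such that `|d|` is small at their ends and `(-1)^i d > -δ` on the `i`-th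
one: an interval is closed just before `(-1)^i d` first drops below `-δ/2`; there `(-1)^(i+1) d`
is far from dropping below `-δ/2`, so the next interval can start with the opposite sign.
Let `h` be a homeomorphism of `ℝ` that is the identity off the intervals and moves the `i`-th one
in the direction `(-1)^i`, and let `g` be `h` clamped into the `δ`-tube around `f`. Then `g` fixes
the ends of the intervals and still moves the `i`-th one in the direction `(-1)^i`, so they are
alternately r- and l-intervals; and `g` is `δ`-close to `f`, hence `C⁰`-close to it by uniform
continuity of `f⁻¹`. -/

section Orbit

variable {α : Type*} [ConditionallyCompleteLinearOrder α] [TopologicalSpace α] [OrderTopology α]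
  {g : α → α} {p q x : α}

theorem tendsto_iterate_of_lt_apply (hg : Monotone g) (hgc : Continuous g) (hq : g q = q)
    (hlt : ∀ y ∈ Ioo p q, y < g y) (hx : x ∈ Ioo p q) :
    Tendsto (fun n => g^[n] x) atTop (𝓝 q) := by
  have hmem : ∀ n, g^[n] x ∈ Icc x q := by
    intro n
    induction n with
    | zero => exact ⟨le_rfl, hx.2.le⟩
    | succ n ih =>
      rw [Function.iterate_succ_apply']
      refine ⟨?_, (hg ih.2).trans_eq hq⟩
      rcases ih.2.eq_or_lt with h | h
      · rw [h, hq]; exact hx.2.le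
      · exact ih.1.trans (hlt _ ⟨hx.1.trans_le ih.1, h⟩).le
  have hbdd : BddAbove (range fun n => g^[n] x) := ⟨q, forall_mem_range.2 fun n => (hmem n).2⟩
  have hlim := tendsto_atTop_ciSup (hg.monotone_iterate_of_le_map (hlt x hx).le) hbdd
  have hfix := isFixedPt_of_tendsto_iterate hlim hgc.continuousAt
  have hxL : x ≤ ⨆ n, g^[n] x := le_ciSup_of_le hbdd 0 le_rfl
  rcases (ciSup_le fun n => (hmem n).2 : ⨆ n, g^[n] x ≤ q).eq_or_lt with h | h
  · rwa [← h]
  · exact absurd hfix (hlt _ ⟨hx.1.trans_le hxL, h⟩).ne'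

theorem tendsto_iterate_of_apply_lt (hg : Monotone g) (hgc : Continuous g) (hp : g p = p)
    (hlt : ∀ y ∈ Ioo p q, g y < y) (hx : x ∈ Ioo p q) :
    Tendsto (fun n => g^[n] x) atTop (𝓝 p) :=
  tendsto_iterate_of_lt_apply (α := αᵒᵈ) hg.dual hgc hp (fun y hy => hlt y ⟨hy.2, hy.1⟩)
    ⟨hx.2, hx.1⟩

end Orbit

theorem isRInt_of_lt_apply {g : HI} {a b : unitInterval} (hab : a < b) (ha : g a = a)
    (hb : g b = b) (hlt : ∀ x ∈ Ioo a b, x < g x) : IsRInt g a b :=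
  ⟨hab, ha, hb, fun x hx => (hlt x hx).ne',
    fun _ hx => tendsto_iterate_of_lt_apply g.monotone g.continuous hb hlt hx⟩

theorem isLInt_of_apply_lt {g : HI} {a b : unitInterval} (hab : a < b) (ha : g a = a)
    (hb : g b = b) (hlt : ∀ x ∈ Ioo a b, g x < x) : IsLInt g a b :=
  ⟨hab, ha, hb, fun x hx => (hlt x hx).ne,
    fun _ hx => tendsto_iterate_of_apply_lt g.monotone g.continuous ha hlt hx⟩

theorem exists_HI_coe_eq {G : ℝ → ℝ} (hmono : StrictMonoOn G (Icc 0 1))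
    (hcont : ContinuousOn G (Icc 0 1)) (h0 : G 0 = 0) (h1 : G 1 = 1) :
    ∃ g : HI, ∀ x : unitInterval, (g x : ℝ) = G x := by
  have hmaps : ∀ x : unitInterval, G x ∈ Icc (0 : ℝ) 1 := fun x =>
    ⟨h0 ▸ hmono.monotoneOn unitInterval.zero_mem x.2 x.2.1,
      h1 ▸ hmono.monotoneOn x.2 unitInterval.one_mem x.2.2⟩
  let G' : unitInterval → unitInterval := fun x => ⟨G x, hmaps x⟩
  have hsurj : Function.Surjective G' := fun y => by
    obtain ⟨x, hx, hGx⟩ := intermediate_value_Icc zero_le_one hcont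
      (by rw [h0, h1]; exact y.2)
    exact ⟨⟨x, hx⟩, Subtype.ext hGx⟩
  exact ⟨StrictMono.orderIsoOfSurjective G' (fun x y hxy => hmono x.2 y.2 hxy) hsurj,
    fun _ => rfl⟩

theorem exists_pos_forall_dC0_lt (f : HI) {r : ℝ} (hr : 0 < r) :
    ∃ δ > 0, ∀ g : HI, (∀ x, dist (f x) (g x) ≤ δ) → dC0 f g < r := by
  obtain ⟨δ', hδ', hsymm⟩ := Metric.uniformContinuous_iff.1
    (CompactSpace.uniformContinuous_of_continuous f.symm.continuous) (r / 2) (half_pos hr)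
  refine ⟨min (r / 4) (δ' / 2), by positivity, fun g hg => ?_⟩
  have hdist : ∀ x, dist (f x) (g x) < r / 2 := fun x =>
    (hg x).trans_lt ((min_le_left _ _).trans_lt (by linarith))
  have hdist_symm : ∀ x, dist (f.symm x) (g.symm x) < r / 2 := fun x => by
    have := hsymm ((hg (g.symm x)).trans_lt ((min_le_right _ _).trans_lt (half_lt_self hδ')))
    rwa [f.symm_apply_apply, g.apply_symm_apply, dist_comm] at this
  calc dC0 f g ≤ r / 2 :=
        Real.iSup_le (fun x => max_le (hdist x).le (hdist_symm x).le) (by positivity)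
    _ < r := half_lt_self hr

def tent (p q x : ℝ) : ℝ := max (min (x - p) (q - x)) 0

theorem tent_eq_zero {p q x : ℝ} (hx : x ∉ Ioo p q) : tent p q x = 0 := by
  refine max_eq_right ?_
  rcases not_and_or.1 hx with h | h
  · exact (min_le_left _ _).trans (by linarith [not_lt.1 h])
  · exact (min_le_right _ _).trans (by linarith [not_lt.1 h])

theorem tent_pos {p q x : ℝ} (hx : x ∈ Ioo p q) : 0 < tent p q x :=
  lt_max_of_lt_left (lt_min (sub_pos.2 hx.1) (sub_pos.2 hx.2))

theorem abs_tent_sub_tent_le (p q x y : ℝ) : |tent p q x - tent p q y| ≤ |x - y| := by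
  refine (abs_max_sub_max_le_abs _ _ _).trans ((abs_min_sub_min_le_max _ _ _ _).trans ?_)
  rw [sub_sub_sub_cancel_right, sub_sub_sub_cancel_left, abs_sub_comm y, max_self]

theorem continuous_tent (p q : ℝ) : Continuous (tent p q) := by
  unfold tent; fun_prop

open Function in
theorem exists_strictMono_sign_displacement {ι : Type*} [Fintype ι] {A B : ι → ℝ}
    (hdisj : Pairwise (Disjoint on fun i => Ioo (A i) (B i))) (s : ι → ℝ)
    (hs : ∀ i, |s i| = 1) :
    ∃ h : ℝ → ℝ, StrictMono h ∧ Continuous h ∧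
      (∀ x, (∀ i, x ∉ Ioo (A i) (B i)) → h x = x) ∧
      ∀ i, ∀ x ∈ Ioo (A i) (B i), 0 < s i * (h x - x) := by
  set c : ℝ := 1 / (2 * Fintype.card ι)
  have hc : 0 ≤ c := by positivity
  have hcard : Fintype.card ι * c ≤ 1 / 2 := by
    rcases eq_or_ne (Fintype.card ι : ℝ) 0 with h | h
    · simp [h]
    · rw [mul_one_div, div_le_div_iff₀ (by positivity) two_pos]; linarith
  set W : ℝ → ℝ := fun x => ∑ i, c * s i * tent (A i) (B i) x
  have hW : ∀ x y, |W x - W y| ≤ |x - y| / 2 := fun x y =>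
    calc |W x - W y| = |∑ i, c * s i * (tent (A i) (B i) x - tent (A i) (B i) y)| := by
          simp only [W, mul_sub, Finset.sum_sub_distrib]
      _ ≤ ∑ i, |c * s i * (tent (A i) (B i) x - tent (A i) (B i) y)| :=
          Finset.abs_sum_le_sum_abs _ _
      _ ≤ ∑ _i : ι, c * |x - y| := Finset.sum_le_sum fun i _ => by
          rw [abs_mul, abs_mul, abs_of_nonneg hc, hs, mul_one]
          exact mul_le_mul_of_nonneg_left (abs_tent_sub_tent_le _ _ x y) hc
      _ ≤ |x - y| / 2 := by
          rw [Finset.sum_const, Finset.card_univ, nsmul_eq_mul, ← mul_assoc]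
          nlinarith [abs_nonneg (x - y)]
  have hWc : Continuous W :=
    continuous_finsetSum _ fun _ _ => continuous_const.mul (continuous_tent _ _)
  refine ⟨fun x => x + W x, fun x y hxy => ?_, continuous_id.add hWc,
    fun x hx => by simp [W, tent_eq_zero (hx _)], fun i x hx => ?_⟩
  · have := hW y x
    rw [abs_of_pos (sub_pos.2 hxy)] at this
    linarith [neg_abs_le (W y - W x)]
  · have hWx : W x = c * s i * tent (A i) (B i) x :=
      Finset.sum_eq_single i (fun j _ hji => by
        rw [tent_eq_zero (Set.disjoint_left.1 (hdisj hji.symm) hx), mul_zero]) (by simp)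
    have hc : 0 < c := by
      have : 0 < Fintype.card ι := Fintype.card_pos_iff.2 ⟨i⟩
      positivity
    have hsq : s i * s i = 1 := by rw [← abs_mul_abs_self, hs, one_mul]
    calc 0 < c * tent (A i) (B i) x := mul_pos hc (tent_pos hx)
      _ = s i * (x + W x - x) := by
          rw [hWx]; linear_combination (-(c * tent (A i) (B i) x)) * hsq

def tubeClamp (F h : ℝ → ℝ) (δ x : ℝ) : ℝ := max (F x - δ) (min (F x + δ) (h x))

section TubeClamp

variable {F h : ℝ → ℝ} {δ x : ℝ}

theorem abs_tubeClamp_sub_le (hδ : 0 ≤ δ) : |tubeClamp F h δ x - F x| ≤ δ := by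
  have hlow : F x - δ ≤ tubeClamp F h δ x := le_max_left _ _
  have hup : tubeClamp F h δ x ≤ F x + δ := max_le (by linarith) (min_le_left _ _)
  exact abs_sub_le_iff.2 ⟨by linarith, by linarith⟩

theorem tubeClamp_eq_self (hF : |F x - x| < δ) (hh : h x = x) : tubeClamp F h δ x = x := by
  rw [abs_lt] at hF
  rw [tubeClamp, hh, min_eq_right (by linarith), max_eq_right (by linarith)]

theorem pos_mul_tubeClamp_sub {σ : ℝ} (hσ : |σ| = 1) (hh : 0 < σ * (h x - x))
    (hF : -δ < σ * (F x - x)) : 0 < σ * (tubeClamp F h δ x - x) := by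
  rcases (abs_eq zero_le_one).1 hσ with rfl | rfl
  · rw [one_mul] at *
    have : x < min (F x + δ) (h x) := lt_min (by linarith) (by linarith)
    exact sub_pos.2 (this.trans_le (le_max_right _ _))
  · simp only [neg_one_mul, neg_pos, sub_neg, neg_lt_neg_iff] at *
    exact max_lt (by linarith) ((min_le_right _ _).trans_lt hh)

theorem StrictMonoOn.tubeClamp {s : Set ℝ} (hF : StrictMonoOn F s) (hh : StrictMono h) :
    StrictMonoOn (tubeClamp F h δ) s := fun x hx y hy hxy =>
  max_lt_max (by linarith [hF hx hy hxy]) (min_lt_min (by linarith [hF hx hy hxy]) (hh hxy))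

theorem Continuous.tubeClamp (hF : Continuous F) (hh : Continuous h) :
    Continuous (tubeClamp F h δ) := by
  unfold _root_.tubeClamp; fun_prop

end TubeClamp

theorem abs_sub_le_of_abs_step_le {D : ℕ → ℝ} {η : ℝ} {N : ℕ}
    (hstep : ∀ j < N, |D (j + 1) - D j| ≤ η) {i j : ℕ} (hij : i ≤ j) (hjN : j ≤ N) :
    |D j - D i| ≤ ((j : ℝ) - i) * η := by
  have := dist_le_Ico_sum_of_dist_le (f := D) hij (d := fun _ => η) fun {k} _ hk => by
    rw [Real.dist_eq, abs_sub_comm]; exact hstep k (by omega)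
  simpa [Real.dist_eq, abs_sub_comm, Nat.cast_sub hij] using this

structure IsGridChain (D : ℕ → ℝ) (c : ℝ) {n : ℕ} (P Q : Fin (n + 1) → ℕ) : Prop where
  lt : ∀ i, P i < Q i
  succ_eq : ∀ i : Fin n, Q i.castSucc + 1 = P i.succ
  abs_left_le : ∀ i, |D (P i)| ≤ c
  abs_right_le : ∀ i, |D (Q i)| ≤ c
  neg_le : ∀ i, ∀ k ∈ Icc (P i) (Q i), -c ≤ (-1) ^ (i : ℕ) * D k

theorem IsGridChain.cons {D : ℕ → ℝ} {c : ℝ} {n : ℕ} {P Q : Fin (n + 1) → ℕ}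
    (h : IsGridChain (-D) c P Q) {a q : ℕ} (haq : a < q) (hq : q + 1 = P 0) (ha : |D a| ≤ c)
    (hq' : |D q| ≤ c) (hD : ∀ k ∈ Icc a q, -c ≤ D k) :
    IsGridChain D c (Fin.cons a P : Fin (n + 2) → ℕ) (Fin.cons q Q) where
  lt := Fin.cases haq h.lt
  succ_eq := Fin.cases hq fun i => by simpa [← Fin.succ_castSucc] using h.succ_eq i
  abs_left_le := Fin.cases ha fun i => by simpa using h.abs_left_le i
  abs_right_le := Fin.cases hq' fun i => by simpa using h.abs_right_le i
  neg_le := Fin.cases (by simpa using hD) fun i k hk => by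
    simpa [pow_succ] using h.neg_le i k hk

theorem exists_isGridChain {N : ℕ} {c η : ℝ} (hc : 4 * η ≤ c) (D : ℕ → ℝ)
    (hstep : ∀ j < N, |D (j + 1) - D j| ≤ η) (hN : D N = 0) (a : ℕ) (haN : a + 2 ≤ N)
    (hlow : -c + 3 * η ≤ D a) (hup : D a ≤ c) :
    ∃ (n : ℕ) (P Q : Fin (n + 1) → ℕ), P 0 = a ∧ Q (Fin.last n) = N - 1 ∧
      IsGridChain D c P Q := by
  classical
  induction hm : N - a using Nat.strong_induction_on generalizing D a with
  | _ m ih =>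
    have hη : 0 ≤ η := (abs_nonneg _).trans (hstep 0 (by omega))
    by_cases hdrop : ∃ u, a ≤ u ∧ u ≤ N ∧ D u < -c
    · obtain ⟨hau, huN, hu⟩ := Nat.find_spec hdrop
      set u := Nat.find hdrop
      have hbefore : ∀ k, a ≤ k → k < u → -c ≤ D k := fun k hak hku =>
        not_lt.1 fun hk => Nat.find_min hdrop hku ⟨hak, by omega, hk⟩
      have hnear : ∀ k ≤ u, u ≤ k + 3 → D k ≤ D u + 3 * η := fun k hk hku => by
        have := abs_sub_le_of_abs_step_le hstep hk huN
        have : ((u : ℝ) - k) * η ≤ 3 * η := mul_le_mul_of_nonneg_right (by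
          rw [sub_le_iff_le_add]; exact_mod_cast (by omega : u ≤ 3 + k)) hη
        linarith [neg_abs_le (D u - D k)]
      have hu4 : a + 4 ≤ u := by
        by_contra! h
        linarith [hnear a hau (by omega)]
      have h3 := hnear (u - 3) (by omega) (by omega)
      have h2 := hnear (u - 2) (by omega) (by omega)
      -- The rest of the chain is built for `-D`, which flips the sign constraint of each piece.
      obtain ⟨n, P, Q, hP, hQ, hchain⟩ := ih (N - (u - 2)) (by omega) (-D)
        (fun j hj => by simpa only [Pi.neg_apply, neg_sub_neg, abs_sub_comm] using hstep j hj)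
        (by simp [hN]) (u - 2) (by omega) (by simp only [Pi.neg_apply]; linarith)
        (by simp only [Pi.neg_apply]; linarith [hbefore (u - 2) (by omega) (by omega)]) rfl
      refine ⟨n + 1, Fin.cons a P, Fin.cons (u - 3) Q, rfl, by simpa [← Fin.succ_last] using hQ,
        hchain.cons (by omega) (by omega) (abs_le.2 ⟨by linarith, hup⟩)
          (abs_le.2 ⟨hbefore _ (by omega) (by omega), by linarith⟩)
          fun k hk => hbefore k hk.1 (by have := hk.2; omega)⟩
    · push Not at hdrop
      have hlast := hstep (N - 1) (by omega)
      rw [Nat.sub_add_cancel (by omega), hN, zero_sub, abs_neg] at hlast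
      exact ⟨0, fun _ => a, fun _ => N - 1, rfl, rfl,
        { lt := fun _ => by omega
          succ_eq := Fin.elim0
          abs_left_le := fun _ => abs_le.2 ⟨by linarith, hup⟩
          abs_right_le := fun _ => hlast.trans (by linarith)
          neg_le := fun i k hk => by
            simpa [Fin.val_eq_zero i] using hdrop k hk.1 (hk.2.trans (by omega)) }⟩
structure IsIntervalChain (ε : ℝ) {n : ℕ} (A B : Fin (n + 1) → ℝ) : Prop where
  pos : 0 < A 0
  lt : ∀ i, A i < B i
  lt_succ : ∀ i : Fin n, B i.castSucc < A i.succ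
  lt_one : B (Fin.last n) < 1
  left_lt : A 0 < ε
  right_lt : 1 - B (Fin.last n) < ε
  gap_lt : ∀ i : Fin n, A i.succ - B i.castSucc < ε

namespace IsIntervalChain

variable {ε : ℝ} {n : ℕ} {A B : Fin (n + 1) → ℝ}

theorem strictMono_left (hc : IsIntervalChain ε A B) : StrictMono A :=
  Fin.strictMono_iff_lt_succ.2 fun i => (hc.lt _).trans (hc.lt_succ i)

theorem strictMono_right (hc : IsIntervalChain ε A B) : StrictMono B :=
  Fin.strictMono_iff_lt_succ.2 fun i => (hc.lt_succ i).trans (hc.lt _)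

theorem right_lt_left (hc : IsIntervalChain ε A B) {i j : Fin (n + 1)} (hij : i < j) :
    B i < A j := by
  have hi : (i : ℕ) < n := by omega
  exact (hc.lt_succ ⟨i, hi⟩).trans_le
    (hc.strictMono_left.monotone (Fin.mk_le_of_le_val (by simp; omega)))

theorem mem_Ioo_left (hc : IsIntervalChain ε A B) (i : Fin (n + 1)) : A i ∈ Ioo 0 1 :=
  ⟨hc.pos.trans_le (hc.strictMono_left.monotone (Fin.zero_le i)),
    ((hc.lt i).trans_le (hc.strictMono_right.monotone (Fin.le_last i))).trans hc.lt_one⟩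

theorem mem_Ioo_right (hc : IsIntervalChain ε A B) (i : Fin (n + 1)) : B i ∈ Ioo 0 1 :=
  ⟨(hc.mem_Ioo_left i).1.trans (hc.lt i),
    (hc.strictMono_right.monotone (Fin.le_last i)).trans_lt hc.lt_one⟩

theorem left_notMem_Ioo (hc : IsIntervalChain ε A B) (i j : Fin (n + 1)) :
    A i ∉ Ioo (A j) (B j) := fun hx => by
  rcases lt_trichotomy i j with h | rfl | h
  · exact (hc.strictMono_left h).not_gt hx.1
  · exact hx.1.false
  · exact (hc.right_lt_left h).not_gt hx.2

theorem right_notMem_Ioo (hc : IsIntervalChain ε A B) (i j : Fin (n + 1)) :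
    B i ∉ Ioo (A j) (B j) := fun hx => by
  rcases lt_trichotomy i j with h | rfl | h
  · exact (hc.right_lt_left h).not_gt hx.1
  · exact hx.2.false
  · exact (hc.strictMono_right h).not_gt hx.2

open Function in
theorem pairwise_disjoint (hc : IsIntervalChain ε A B) :
    Pairwise (Disjoint on fun i => Ioo (A i) (B i)) := by
  intro i j hij
  rw [onFun, Set.disjoint_left]
  intro x hxi hxj
  rcases hij.lt_or_gt with h | h
  · exact (hxi.2.trans (hc.right_lt_left h)).not_gt hxj.1
  · exact (hxj.2.trans (hc.right_lt_left h)).not_gt hxi.1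

end IsIntervalChain

theorem exists_mem_Icc_abs_sub_div_lt {N : ℕ} (hN : 0 < N) {p q : ℕ} {x : ℝ}
    (hx : x ∈ Icc (p / N : ℝ) (q / N)) : ∃ j ∈ Icc p q, |x - j / N| < 1 / N := by
  have hN' : (0 : ℝ) < N := by exact_mod_cast hN
  have hx0 : 0 ≤ x * N := mul_nonneg ((div_nonneg p.cast_nonneg hN'.le).trans hx.1) hN'.le
  refine ⟨⌊x * N⌋₊, ⟨Nat.le_floor ?_, Nat.floor_le_of_le ?_⟩, ?_⟩
  · rw [← div_le_iff₀ hN']; exact hx.1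
  · rw [← le_div_iff₀ hN']; exact hx.2
  · rw [show x - ⌊x * N⌋₊ / N = (x * N - ⌊x * N⌋₊) / N by field_simp, abs_div,
      abs_of_pos hN', div_lt_div_iff_of_pos_right hN', abs_lt]
    constructor <;> linarith [Nat.floor_le hx0, Nat.lt_floor_add_one (x * N)]

theorem IsGridChain.isIntervalChain {D : ℕ → ℝ} {c ε : ℝ} {n N : ℕ}
    {P Q : Fin (n + 1) → ℕ} (h : IsGridChain D c P Q) (hP : P 0 = 1)
    (hQ : Q (Fin.last n) = N - 1) (hN : 0 < N) (hNε : 1 / (N : ℝ) < ε) :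
    IsIntervalChain ε (fun i => (P i : ℝ) / N) (fun i => (Q i : ℝ) / N) := by
  have hN0 : (0 : ℝ) < N := by exact_mod_cast hN
  exact
    { pos := by simp [hP, hN0]
      lt := fun i => div_lt_div_of_pos_right (by exact_mod_cast h.lt i) hN0
      lt_succ := fun i => div_lt_div_of_pos_right
        (by rw [← h.succ_eq i]; push_cast; linarith) hN0
      lt_one := by
        rw [hQ, div_lt_one hN0, Nat.cast_sub hN]; simp
      left_lt := by simpa [hP] using hNε
      right_lt := by
        rwa [hQ, Nat.cast_sub hN, Nat.cast_one, sub_div, div_self hN0.ne', sub_sub_cancel]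
      gap_lt := fun i => by
        rwa [← h.succ_eq i, Nat.cast_add_one, ← sub_div, add_sub_cancel_left] }

theorem exists_grid_abs_sub_lt {d : ℝ → ℝ} (hd : ContinuousOn d (Icc 0 1)) {η ε : ℝ}
    (hη : 0 < η) (hε : 0 < ε) :
    ∃ N : ℕ, 3 < N ∧ 1 / (N : ℝ) < ε ∧
      ∀ x ∈ Icc (0 : ℝ) 1, ∀ j ≤ N, |x - j / N| ≤ 1 / N → |d x - d (j / N)| < η := by
  obtain ⟨θ, hθ, hdθ⟩ := Metric.uniformContinuousOn_iff.1
    (isCompact_Icc.uniformContinuousOn_of_continuous hd) η hη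
  obtain ⟨N, hN⟩ := exists_nat_gt (3 + θ⁻¹ + ε⁻¹)
  have hθ' := inv_pos.2 hθ
  have hε' := inv_pos.2 hε
  have hN0 : (0 : ℝ) < N := by linarith
  have hNθ : 1 / (N : ℝ) < θ := by rw [one_div, inv_lt_comm₀ hN0 hθ]; linarith
  refine ⟨N, by exact_mod_cast (by linarith : (3 : ℝ) < N),
    by rw [one_div, inv_lt_comm₀ hN0 hε]; linarith, fun x hx j hj hxj => ?_⟩
  have hj01 : (j / N : ℝ) ∈ Icc 0 1 :=
    ⟨by positivity, (div_le_one hN0).2 (by exact_mod_cast hj)⟩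
  simpa [Real.dist_eq] using hdθ x hx _ hj01 (by rw [Real.dist_eq]; exact hxj.trans_lt hNθ)

theorem exists_isIntervalChain {d : ℝ → ℝ} (hd : ContinuousOn d (Icc 0 1)) (h0 : d 0 = 0)
    (h1 : d 1 = 0) {δ ε : ℝ} (hδ : 0 < δ) (hε : 0 < ε) :
    ∃ (n : ℕ) (A B : Fin (n + 1) → ℝ), IsIntervalChain ε A B ∧
      (∀ i, |d (A i)| < δ ∧ |d (B i)| < δ) ∧
      ∀ i, ∀ x ∈ Icc (A i) (B i), -δ < (-1) ^ (i : ℕ) * d x := by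
  obtain ⟨N, hN3, hNε, hnear⟩ := exists_grid_abs_sub_lt hd (η := δ / 8) (by positivity) hε
  have hN0 : (0 : ℝ) < N := by exact_mod_cast (by omega : 0 < N)
  have hstep : ∀ j < N, |d ((j + 1 : ℕ) / N) - d (j / N)| ≤ δ / 8 := fun j hj => by
    rw [abs_sub_comm]
    refine (hnear _ ⟨by positivity, (div_le_one hN0).2 (by exact_mod_cast hj.le)⟩ (j + 1) hj
      ?_).le
    rw [Nat.cast_add_one, ← sub_div, sub_add_cancel_left, abs_div, abs_neg, abs_one,
      abs_of_pos hN0]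
  have hD1 : |d (1 / N)| ≤ δ / 8 := by
    simpa [h0] using hstep 0 (by omega)
  obtain ⟨n, P, Q, hP, hQ, hPQ⟩ := exists_isGridChain (c := δ / 2) (by linarith)
    (fun j => d (j / N)) hstep (by simp [hN0.ne', h1]) 1 (by omega)
    (by simp only [Nat.cast_one]; linarith [neg_abs_le (d (1 / N))])
    (by simp only [Nat.cast_one]; linarith [le_abs_self (d (1 / N))])
  have hc := hPQ.isIntervalChain hP hQ (by omega) hNε
  refine ⟨n, _, _, hc, fun i => ⟨(hPQ.abs_left_le i).trans_lt (by linarith),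
    (hPQ.abs_right_le i).trans_lt (by linarith)⟩, fun i x hx => ?_⟩
  obtain ⟨j, hj, hxj⟩ := exists_mem_Icc_abs_sub_div_lt (by omega) hx
  have hjN : j ≤ N := by
    have := (div_lt_one hN0).1 (hc.mem_Ioo_right i).2
    exact hj.2.trans (by exact_mod_cast this.le)
  have hx01 : x ∈ Icc (0 : ℝ) 1 :=
    ⟨(hc.mem_Ioo_left i).1.le.trans hx.1, hx.2.trans (hc.mem_Ioo_right i).2.le⟩
  have hdx := hnear x hx01 j hjN hxj.le
  have hdj : -(δ / 2) ≤ (-1) ^ (i : ℕ) * d (j / N) := hPQ.neg_le i j hj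
  have h := neg_abs_le ((-1) ^ (i : ℕ) * (d x - d (j / N)))
  rw [abs_mul, abs_neg_one_pow, one_mul, mul_sub] at h
  linarith

theorem pProp_of_isIntervalChain {g : HI} {G : ℝ → ℝ}
    (hg : ∀ x : unitInterval, (g x : ℝ) = G x)
    {ε : ℝ} {n : ℕ} {A B : Fin (n + 1) → ℝ} (hc : IsIntervalChain ε A B)
    (hA : ∀ i, G (A i) = A i) (hB : ∀ i, G (B i) = B i)
    (hsign : ∀ i, ∀ x ∈ Ioo (A i) (B i), 0 < (-1) ^ (i : ℕ) * (G x - x)) : PProp g ε := by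
  let a i : unitInterval := ⟨A i, Ioo_subset_Icc_self (hc.mem_Ioo_left i)⟩
  let b i : unitInterval := ⟨B i, Ioo_subset_Icc_self (hc.mem_Ioo_right i)⟩
  have ha i : g (a i) = a i := Subtype.ext ((hg _).trans (hA i))
  have hb i : g (b i) = b i := Subtype.ext ((hg _).trans (hB i))
  have hsign' i (x : unitInterval) (hx : x ∈ Ioo (a i) (b i)) :
      0 < (-1) ^ (i : ℕ) * ((g x : ℝ) - x) := hg x ▸ hsign i x hx
  refine ⟨n, a, b, hc.pos, hc.lt, hc.lt_succ, hc.lt_one, fun i hi => ?_, fun i hi => ?_,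
    hc.left_lt, hc.right_lt, hc.gap_lt⟩
  · refine isRInt_of_lt_apply (hc.lt i) (ha i) (hb i) fun x hx => ?_
    have := hsign' i x hx
    rw [hi.neg_one_pow, one_mul, sub_pos] at this
    exact this
  · refine isLInt_of_apply_lt (hc.lt i) (ha i) (hb i) fun x hx => ?_
    have := hsign' i x hx
    rw [(Nat.not_even_iff_odd.1 hi).neg_one_pow, neg_one_mul, neg_pos, sub_neg] at this
    exact this

/-- for each `ε > 0` the set `U_ε` of orientation-preserving homeomorphisms
of `[0,1]` satisfying `P_ε` is dense in `H⁺([0,1])` for the `C⁰` distance. -/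
theorem stmt_5 (ε : ℝ) (hε : 0 < ε) (f : HI) (r : ℝ) (hr : 0 < r) :
    ∃ g : HI, PProp g ε ∧ dC0 f g < r := by
  obtain ⟨δ, hδ, hclose⟩ := exists_pos_forall_dC0_lt f hr
  set F : ℝ → ℝ := IccExtend zero_le_one fun t : unitInterval => (f t : ℝ)
  have hF (x : unitInterval) : F x = f x := IccExtend_val _ _ x
  have hFc : Continuous F := (continuous_subtype_val.comp f.continuous).Icc_extend'
  have hF0 : F 0 = 0 := (hF 0).trans (congrArg Subtype.val f.map_bot)
  have hF1 : F 1 = 1 := (hF 1).trans (congrArg Subtype.val f.map_top)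
  obtain ⟨n, A, B, hc, hends, hint⟩ := exists_isIntervalChain (d := fun x => F x - x)
    (hFc.sub continuous_id).continuousOn (by simp [hF0]) (by simp [hF1]) hδ hε
  obtain ⟨h, hmono, hcont, hfix, hsign⟩ :=
    exists_strictMono_sign_displacement hc.pairwise_disjoint _ fun i => abs_neg_one_pow (i : ℕ)
  have hFmono : StrictMonoOn F (Icc 0 1) :=
    ((Subtype.strictMono_coe _).comp f.strictMono).strictMonoOn_IccExtend zero_le_one
  obtain ⟨g, hg⟩ := exists_HI_coe_eq (hFmono.tubeClamp (δ := δ) hmono)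
    (hFc.tubeClamp hcont).continuousOn
    (tubeClamp_eq_self (by simpa [hF0]) (hfix 0 fun i hi => (hc.mem_Ioo_left i).1.not_gt hi.1))
    (tubeClamp_eq_self (by simpa [hF1]) (hfix 1 fun i hi => (hc.mem_Ioo_right i).2.not_gt hi.2))
  refine ⟨g, pProp_of_isIntervalChain hg hc
    (fun i => tubeClamp_eq_self (hends i).1 (hfix _ (hc.left_notMem_Ioo i)))
    (fun i => tubeClamp_eq_self (hends i).2 (hfix _ (hc.right_notMem_Ioo i)))
    (fun i x hx => pos_mul_tubeClamp_sub (abs_neg_one_pow _) (hsign i x hx)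
      (hint i x (Ioo_subset_Icc_self hx))), hclose g fun x => ?_⟩
  rw [Subtype.dist_eq, hg, ← hF, Real.dist_eq, abs_sub_comm]
  exact abs_tubeClamp_sub_le hδ.le
end
end

section
/- Under the hypotheses that X = ⋃_n a_n with each a_n a compact invariant arc with fixed endpoints, the map φ_n: H(X) → H⁺(a_n) × H_n given by φ_n(f) = (f|_{a_n}, f|_{X_n}), where X_n = cl(X \ a_n) and H_n = {f ∈ H(X_n) : f fixes p_n, q_n}, is a homeomorphism with respect to the C⁰ and product topologies. -/
/-! Every homeomorphism of `X` preserves `A`, hence also `B = cl(X \ A)`, so `f` restricts to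
both pieces. As `A` is closed and `A \ {p, q}` is open, `A ∩ B ⊆ {p, q}`; hence homeomorphisms
of `A` and of `B` fixing `p` and `q` agree on the overlap of the closed cover `{A, B}` and glue
to a homeomorphism of `X`, whose inverse is glued from the inverses. Since every point lies in
`A` or in `B`, the `C⁰` distance of `f` and `g` is the larger of the `C⁰` distances of their
restrictions. -/

open Set Filter Topology

noncomputable section

/-- The `C⁰` distance on the homeomorphism group of a metric space. -/
def dC0H {α : Type*} [MetricSpace α] (f g : α ≃ₜ α) : ℝ :=
  ⨆ x : α, max (dist (f x) (g x)) (dist (f.symm x) (g.symm x))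

/-- A subset of the homeomorphism group is open for the `C⁰` distance. -/
def OpenC0H {α : Type*} [MetricSpace α] (U : Set (α ≃ₜ α)) : Prop :=
  ∀ f ∈ U, ∃ r : ℝ, 0 < r ∧ ∀ g : α ≃ₜ α, dC0H f g < r → g ∈ U

/-- A subset of the homeomorphism group is dense for the `C⁰` distance. -/
def DenseC0H {α : Type*} [MetricSpace α] (S : Set (α ≃ₜ α)) : Prop :=
  ∀ f : α ≃ₜ α, ∀ r : ℝ, 0 < r → ∃ g ∈ S, dC0H f g < r

/-- A subset of the homeomorphism group is a `G_δ` set for the `C⁰` topology. -/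
def GdeltaC0H {α : Type*} [MetricSpace α] (S : Set (α ≃ₜ α)) : Prop :=
  ∃ U : ℕ → Set (α ≃ₜ α), (∀ n, OpenC0H (U n)) ∧ S = ⋂ n, U n

/-- The conjugacy class of a homeomorphism `f`. -/
def ConjClassH {α : Type*} [MetricSpace α] (f : α ≃ₜ α) : Set (α ≃ₜ α) :=
  {g : α ≃ₜ α | ∃ h : α ≃ₜ α, ∀ x, g x = h (f (h.symm x))}

section C0Distance

variable {X : Type*} [MetricSpace X]

lemma dC0H_nonneg (f g : X ≃ₜ X) : 0 ≤ dC0H f g :=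
  Real.iSup_nonneg fun _ => le_max_of_le_left dist_nonneg

lemma le_dC0H [BoundedSpace X] (f g : X ≃ₜ X) (x : X) :
    max (dist (f x) (g x)) (dist (f.symm x) (g.symm x)) ≤ dC0H f g := by
  have hX : Bornology.IsBounded (univ : Set X) := Bornology.isBounded_univ.2 inferInstance
  refine le_ciSup (f := fun y => max (dist (f y) (g y)) (dist (f.symm y) (g.symm y)))
    ⟨Metric.diam (univ : Set X), ?_⟩ x
  rintro _ ⟨y, rfl⟩
  exact max_le (Metric.dist_le_diam_of_mem hX trivial trivial)
    (Metric.dist_le_diam_of_mem hX trivial trivial)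

variable [BoundedSpace X] {s t : Set X}

lemma dC0H_sets_le (f g : X ≃ₜ X) (hf : s = f ⁻¹' s) (hg : s = g ⁻¹' s) :
    dC0H (f.sets hf) (g.sets hg) ≤ dC0H f g :=
  Real.iSup_le (fun x => le_dC0H f g x) (dC0H_nonneg f g)

lemma dC0H_le_max_sets (hst : s ∪ t = univ) (f g : X ≃ₜ X) (hfs : s = f ⁻¹' s)
    (hgs : s = g ⁻¹' s) (hft : t = f ⁻¹' t) (hgt : t = g ⁻¹' t) :
    dC0H f g ≤ max (dC0H (f.sets hfs) (g.sets hgs)) (dC0H (f.sets hft) (g.sets hgt)) := by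
  refine Real.iSup_le (fun x => ?_) ((dC0H_nonneg _ _).trans (le_max_left _ _))
  rcases hst ▸ mem_univ x with hx | hx
  · exact (le_dC0H (f.sets hfs) (g.sets hgs) ⟨x, hx⟩).trans (le_max_left _ _)
  · exact (le_dC0H (f.sets hft) (g.sets hgt) ⟨x, hx⟩).trans (le_max_right _ _)

end C0Distance

section Glue

variable {X : Type*} {A B : Set X}

open scoped Classical in
def glueMap (hAB : Aᶜ ⊆ B) (g : A → X) (h : B → X) (x : X) : X :=
  if hx : x ∈ A then g ⟨x, hx⟩ else h ⟨x, hAB hx⟩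

variable (hAB : Aᶜ ⊆ B) {g : A → X} {h : B → X}

lemma glueMap_of_mem_left {x : X} (hx : x ∈ A) : glueMap hAB g h x = g ⟨x, hx⟩ :=
  dif_pos hx

lemma glueMap_of_mem_right (hgh : ∀ x (hxA : x ∈ A) (hxB : x ∈ B), g ⟨x, hxA⟩ = h ⟨x, hxB⟩)
    {x : X} (hx : x ∈ B) : glueMap hAB g h x = h ⟨x, hx⟩ := by
  unfold glueMap
  split_ifs with hxA
  exacts [hgh x hxA hx, rfl]

lemma continuous_glueMap [TopologicalSpace X] (hA : IsClosed A) (hB : IsClosed B)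
    (hg : Continuous g) (hh : Continuous h)
    (hgh : ∀ x (hxA : x ∈ A) (hxB : x ∈ B), g ⟨x, hxA⟩ = h ⟨x, hxB⟩) :
    Continuous (glueMap hAB g h) := by
  rw [← continuousOn_univ, ← compl_subset_iff_union.1 hAB]
  refine ContinuousOn.union_of_isClosed ?_ ?_ hA hB <;>
    rw [continuousOn_iff_continuous_domRestrict]
  · convert hg using 1
    exact funext fun x => glueMap_of_mem_left hAB x.2
  · convert hh using 1
    exact funext fun x => glueMap_of_mem_right hAB hgh x.2

end Glue

section GlueHomeomorph

variable {X : Type*} [TopologicalSpace X] {A B : Set X}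

lemma Homeomorph.symm_apply_eq_self_of_apply_eq_self {s : Set X} {g : s ≃ₜ s} {P : X → Prop}
    (hg : ∀ x : s, P x → g x = x) (x : s) (hx : P x) : g.symm x = x :=
  g.symm_apply_eq.2 (hg x hx).symm

variable {g : A ≃ₜ A} {h : B ≃ₜ B}
  (hg : ∀ x : A, (x : X) ∈ B → g x = x) (hh : ∀ x : B, (x : X) ∈ A → h x = x)
include hg hh

lemma coe_apply_eq_of_fix_inter (x : X) (hxA : x ∈ A) (hxB : x ∈ B) :
    (g ⟨x, hxA⟩ : X) = h ⟨x, hxB⟩ :=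
  (congrArg Subtype.val (hg _ hxB)).trans (congrArg Subtype.val (hh ⟨x, hxB⟩ hxA)).symm

lemma glueMap_symm_glueMap (hAB : Aᶜ ⊆ B) (x : X) :
    glueMap hAB (Subtype.val ∘ g.symm) (Subtype.val ∘ h.symm)
      (glueMap hAB (Subtype.val ∘ g) (Subtype.val ∘ h) x) = x := by
  have hgh' := coe_apply_eq_of_fix_inter (g := g.symm) (h := h.symm)
    (Homeomorph.symm_apply_eq_self_of_apply_eq_self hg) (Homeomorph.symm_apply_eq_self_of_apply_eq_self hh)
  rcases (em (x ∈ A)).imp_right (@hAB x) with hx | hx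
  · rw [glueMap_of_mem_left hAB hx, Function.comp_apply, glueMap_of_mem_left hAB (g ⟨x, hx⟩).2]
    simp
  · rw [glueMap_of_mem_right hAB (coe_apply_eq_of_fix_inter hg hh) hx, Function.comp_apply,
      glueMap_of_mem_right hAB hgh' (h ⟨x, hx⟩).2]
    simp

lemma exists_homeomorph_extend_of_fix_inter (hA : IsClosed A) (hB : IsClosed B) (hAB : Aᶜ ⊆ B) :
    ∃ F : X ≃ₜ X, (∀ x : A, F x = g x) ∧ (∀ x : B, F x = h x) := by
  have hg' := Homeomorph.symm_apply_eq_self_of_apply_eq_self hg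
  have hh' := Homeomorph.symm_apply_eq_self_of_apply_eq_self hh
  refine ⟨
    { toFun := glueMap hAB (Subtype.val ∘ g) (Subtype.val ∘ h)
      invFun := glueMap hAB (Subtype.val ∘ g.symm) (Subtype.val ∘ h.symm)
      left_inv := glueMap_symm_glueMap hg hh hAB
      right_inv := glueMap_symm_glueMap (g := g.symm) (h := h.symm) hg' hh' hAB
      continuous_toFun := continuous_glueMap hAB hA hB (by fun_prop) (by fun_prop)
        (coe_apply_eq_of_fix_inter hg hh)
      continuous_invFun := continuous_glueMap hAB hA hB (by fun_prop) (by fun_prop)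
        (coe_apply_eq_of_fix_inter hg' hh') },
    fun x => glueMap_of_mem_left hAB x.2,
    fun x => glueMap_of_mem_right hAB (coe_apply_eq_of_fix_inter hg hh) x.2⟩

end GlueHomeomorph

lemma Homeomorph.ext_of_sets {X : Type*} [TopologicalSpace X] {s t : Set X} (hst : s ∪ t = univ)
    {f g : X ≃ₜ X} (hfs : s = f ⁻¹' s) (hgs : s = g ⁻¹' s) (hft : t = f ⁻¹' t)
    (hgt : t = g ⁻¹' t) (hs : f.sets hfs = g.sets hgs) (ht : f.sets hft = g.sets hgt) : f = g := by
  ext x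
  rcases hst ▸ mem_univ x with hx | hx
  · exact congrArg Subtype.val (DFunLike.congr_fun hs ⟨x, hx⟩)
  · exact congrArg Subtype.val (DFunLike.congr_fun ht ⟨x, hx⟩)

lemma Homeomorph.apply_eq_self_of_inter_subset_pair {X : Type*} [TopologicalSpace X]
    {s t : Set X} {p q : X} (hst : s ∩ t ⊆ {p, q}) {hp : p ∈ s} {hq : q ∈ s} {g : s ≃ₜ s}
    (hgp : (g ⟨p, hp⟩ : X) = p) (hgq : (g ⟨q, hq⟩ : X) = q) (x : s) (hx : (x : X) ∈ t) :
    g x = x := by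
  obtain ⟨x, hxs⟩ := x
  rcases hst ⟨hxs, hx⟩ with rfl | rfl
  exacts [Subtype.ext hgp, Subtype.ext hgq]

lemma inter_closure_compl_subset {X : Type*} [TopologicalSpace X] {A U : Set X}
    (hU : IsOpen (A \ U)) : A ∩ closure Aᶜ ⊆ U := by
  rintro x ⟨hxA, hx⟩
  by_contra hxU
  rw [closure_compl] at hx
  exact hx (interior_maximal sdiff_subset hU ⟨hxA, hxU⟩)

/-- in the setting of the arc decomposition (an invariant compact arc `A` with
endpoints `p, q` fixed by every homeomorphism of `X`, whose interior is a free arc), the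
restriction map `φ : f ↦ (f|_A, f|_B)`, with `B = cl(X \ A)`, is a bijection from `H(X)`
onto `H⁺(A) × H_B` (the pairs of homeomorphisms of `A` and of `B` fixing the endpoints),
and `φ` and its inverse are continuous for the `C⁰` distances (with the product of the two
`C⁰` distances on the target). -/
theorem stmt_12 {X : Type*} [MetricSpace X] [CompactSpace X]
    (A : Set X) (p q : X) (B : Set X) (hB : B = closure Aᶜ)
    (hp : p ∈ A) (hq : q ∈ A) (hpB : p ∈ B) (hqB : q ∈ B)
    (harc : ∃ e : unitInterval ≃ₜ A, ((e 0 : X) = p ∧ (e 1 : X) = q))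
    (hfree : IsOpen (A \ {p, q}) ∧ Nonempty (ℝ ≃ₜ ↥(A \ {p, q})))
    (hinv : ∀ f : X ≃ₜ X, (∀ x : X, x ∈ A ↔ f x ∈ A) ∧ f p = p ∧ f q = q) :
    ∃ φ : (X ≃ₜ X) → (A ≃ₜ A) × (B ≃ₜ B),
      (∀ f : X ≃ₜ X, ∀ x : A, ((φ f).1 x : X) = f x) ∧
      (∀ f : X ≃ₜ X, ∀ x : B, ((φ f).2 x : X) = f x) ∧
      Function.Injective φ ∧
      Set.range φ = {gh : (A ≃ₜ A) × (B ≃ₜ B) |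
        (gh.1 ⟨p, hp⟩ : X) = p ∧ (gh.1 ⟨q, hq⟩ : X) = q ∧
        (gh.2 ⟨p, hpB⟩ : X) = p ∧ (gh.2 ⟨q, hqB⟩ : X) = q} ∧
      (∀ f : X ≃ₜ X, ∀ ε : ℝ, 0 < ε → ∃ δ : ℝ, 0 < δ ∧ ∀ g : X ≃ₜ X,
        dC0H f g < δ → max (dC0H (φ f).1 (φ g).1) (dC0H (φ f).2 (φ g).2) < ε) ∧
      (∀ f : X ≃ₜ X, ∀ ε : ℝ, 0 < ε → ∃ δ : ℝ, 0 < δ ∧ ∀ g : X ≃ₜ X,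
        max (dC0H (φ f).1 (φ g).1) (dC0H (φ f).2 (φ g).2) < δ → dC0H f g < ε) := by
  obtain ⟨e, -⟩ := harc
  have hA : IsClosed A := (isCompact_iff_compactSpace.mpr e.compactSpace).isClosed
  have hBc : IsClosed B := hB ▸ isClosed_closure
  have hAB : Aᶜ ⊆ B := hB ▸ subset_closure
  have hcov : A ∪ B = univ := compl_subset_iff_union.1 hAB
  have hApq : A ∩ B ⊆ {p, q} := hB ▸ inter_closure_compl_subset hfree.1
  have invA (f : X ≃ₜ X) : A = f ⁻¹' A := ext fun x => (hinv f).1 x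
  have invB (f : X ≃ₜ X) : B = f ⁻¹' B := by
    rw [hB, f.preimage_closure, preimage_compl, ← invA f]
  refine ⟨fun f => (f.sets (invA f), f.sets (invB f)), fun _ _ => rfl, fun _ _ => rfl,
    fun f g hfg => ?_, ?_, fun f ε hε => ⟨ε, hε, fun g hfg => ?_⟩,
    fun f ε hε => ⟨ε, hε, fun g hfg => ?_⟩⟩
  · exact Homeomorph.ext_of_sets hcov (invA f) (invA g) (invB f) (invB g)
      (congrArg Prod.fst hfg) (congrArg Prod.snd hfg)
  · ext ⟨g, h⟩
    constructor
    · rintro ⟨f, ⟨⟩⟩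
      exact ⟨(hinv f).2.1, (hinv f).2.2, (hinv f).2.1, (hinv f).2.2⟩
    · rintro ⟨hgp, hgq, hhp, hhq⟩
      obtain ⟨F, hFg, hFh⟩ := exists_homeomorph_extend_of_fix_inter
        (Homeomorph.apply_eq_self_of_inter_subset_pair hApq hgp hgq)
        (Homeomorph.apply_eq_self_of_inter_subset_pair (inter_comm A B ▸ hApq) hhp hhq) hA hBc hAB
      exact ⟨F, Prod.ext (Homeomorph.ext fun x => Subtype.ext (hFg x))
        (Homeomorph.ext fun x => Subtype.ext (hFh x))⟩
  · exact (max_le (dC0H_sets_le f g (invA f) (invA g))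
      (dC0H_sets_le f g (invB f) (invB g))).trans_lt hfg
  · exact (dC0H_le_max_sets hcov f g (invA f) (invA g) (invB f) (invB g)).trans_lt hfg
end
end

section
/- Let Y ⊂ ℝ² be the union of the lower unit half-circle {x²+y²=1, y≤0}, the segment [−1,1]×{0}, and the vertical segments {−1+2/n}×[0,1/n] for n ≥ 1. Then every homeomorphism f of Y maps each constituent arc of the natural arc decomposition of Y to itself and fixes the endpoints of these arcs. -/
open Set Filter Topology

/-- The lower half of the unit circle. -/
def arcC : Set (ℝ × ℝ) := {p : ℝ × ℝ | p.1 ^ 2 + p.2 ^ 2 = 1 ∧ p.2 ≤ 0}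

/-- The vertical segment `{-1 + 2/(n+1)} × [0, 1/(n+1)]` (for `n ≥ 0`, i.e. the paper's
segments indexed by `n ≥ 1`). -/
def arcV (n : ℕ) : Set (ℝ × ℝ) :=
  {p : ℝ × ℝ | p.1 = -1 + 2 / ((n : ℝ) + 1) ∧ p.2 ∈ Set.Icc (0 : ℝ) (1 / ((n : ℝ) + 1))}

/-- The horizontal arc between consecutive branch points. -/
def arcH (n : ℕ) : Set (ℝ × ℝ) :=
  {p : ℝ × ℝ | p.1 ∈ Set.Icc (-1 + 2 / ((n : ℝ) + 2)) (-1 + 2 / ((n : ℝ) + 1)) ∧ p.2 = 0}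

/-- The plane continuum `Y`: lower half unit circle, horizontal segment `[-1,1] × {0}` and
vertical segments `{-1 + 2/n} × [0, 1/n]`, `n ≥ 1`. -/
def Y : Set (ℝ × ℝ) :=
  arcC ∪ {p : ℝ × ℝ | p.1 ∈ Set.Icc (-1 : ℝ) 1 ∧ p.2 = 0} ∪ ⋃ n : ℕ, arcV n

/-- The natural decomposition of `Y` into arcs: the half circle, the vertical segments and
the horizontal arcs between consecutive branch points. -/
def arcs : ℕ → Set (ℝ × ℝ) := fun n =>
  if n = 0 then arcC else if n % 2 = 1 then arcV (n / 2) else arcH (n / 2 - 1)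

/-!
The cut points of `Y` are the points of the vertical segments other than their tips. Their closure
`comb` adds `pLeft = (-1, 0)`; removing the cut points from `comb` leaves `pLeft` and the tips,
and `pLeft` is the only accumulation point among them. Hence every homeomorphism `f` of `Y` fixes
`pLeft`, and it permutes the components of `Y \ comb` (the open lower half circle and the open
horizontal arcs between consecutive branch points) as well as those of `comb \ {pLeft}` (the
vertical segments). The lower half circle is the only component of `Y \ comb` adherent to `pLeft`,
so it is invariant and its other endpoint `(1, 0)` is fixed. Walking left along the horizontal
segment, each horizontal arc is the only component besides the previous one adherent to the fixed
branch point they share, so it is invariant and its other endpoint is fixed. Finally each vertical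
segment contains its fixed branch point, hence is invariant, and its tip is the only non-cut point
of `comb` on it.
-/

open Function

section General

variable {X X' : Type*} [TopologicalSpace X] [TopologicalSpace X']

def cutPoints (X : Type*) [TopologicalSpace X] : Set X := {x | ¬IsPreconnected ({x}ᶜ : Set X)}

theorem Homeomorph.image_cutPoints (f : X ≃ₜ X') : f '' cutPoints X = cutPoints X' := by
  ext y
  obtain ⟨x, rfl⟩ := f.surjective y
  rw [f.injective.mem_set_image]
  simp only [cutPoints, mem_ofPred_eq]
  rw [← f.isPreconnected_image, image_compl_eq f.bijective, image_singleton]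

theorem Homeomorph.apply_eq_self_of_unique_accumulation (f : X ≃ₜ X) {E : Set X}
    (hE : f '' E = E) {x : X} (hx : x ∈ E) (hacc : x ∈ closure (E \ {x}))
    (huniq : ∀ y ∈ E, y ∈ closure (E \ {y}) → y = x) : f x = x := by
  refine huniq (f x) (hE ▸ mem_image_of_mem f hx) ?_
  rw [← hE, ← image_singleton, ← image_sdiff f.injective, ← f.image_closure]
  exact mem_image_of_mem f hacc

theorem Homeomorph.apply_eq_self_of_closure_sdiff_eq_pair (f : X ≃ₜ X) {P : Set X}
    (hP : f '' P = P) {a b : X} (hab : closure P \ P = {a, b}) (ha : f a = a) : f b = b := by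
  have hfr : f '' (closure P \ P) = closure P \ P := by
    rw [image_sdiff f.injective, f.image_closure, hP]
  have hb : f b ∈ ({a, b} : Set X) := by
    rw [← hab, ← hfr]
    exact mem_image_of_mem f (hab ▸ Or.inr rfl)
  rcases hb with hb | hb
  · exact f.injective (hb.trans ha.symm) ▸ ha
  · exact hb

theorem connectedComponentIn_eq_of_partition {ι : Type*} {F : Set X} {P U : ι → Set X}
    (hU : ∀ i, IsOpen (U i)) (hFU : ∀ i, F ∩ U i = P i) (hcover : F ⊆ ⋃ i, P i)
    (hdisj : Pairwise (Disjoint on P)) (hpre : ∀ i, IsPreconnected (P i)) {i : ι} {x : X}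
    (hx : x ∈ P i) : connectedComponentIn F x = P i := by
  have hPF : ∀ j, P j ⊆ F := fun j => hFU j ▸ inter_subset_left
  have hPU : ∀ j, P j ⊆ U j := fun j => hFU j ▸ inter_subset_right
  have hmem : ∀ {y j}, y ∈ F → y ∈ U j → y ∈ P j := fun hyF hyU => hFU _ ▸ ⟨hyF, hyU⟩
  refine subset_antisymm ?_ ((hpre i).subset_connectedComponentIn hx (hPF i))
  set T := connectedComponentIn F x
  have hTF : T ⊆ F := connectedComponentIn_subset F x
  set V := ⋃ j ∈ {j | j ≠ i}, U j
  have hcovT : T ⊆ U i ∪ V := by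
    intro y hy
    obtain ⟨j, hyj⟩ := mem_iUnion.1 (hcover (hTF hy))
    by_cases hji : j = i
    · exact Or.inl (hji ▸ hPU j hyj)
    · exact Or.inr (mem_biUnion hji (hPU j hyj))
  have hdisjT : T ∩ (U i ∩ V) = ∅ := by
    refine eq_empty_of_forall_notMem fun y ⟨hyT, hyi, hyV⟩ => ?_
    obtain ⟨j, hji, hyj⟩ := mem_iUnion₂.1 hyV
    exact (hdisj hji).ne_of_mem (hmem (hTF hyT) hyj) (hmem (hTF hyT) hyi) rfl
  rcases isPreconnected_iff_subset_of_disjoint.1 isPreconnected_connectedComponentIn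
      (U i) V (hU i) (isOpen_biUnion fun j _ => hU j) hcovT hdisjT with h | h
  · exact fun y hy => hmem (hTF hy) (h hy)
  · obtain ⟨j, hji, hxj⟩ := mem_iUnion₂.1 (h (mem_connectedComponentIn (hPF i hx)))
    exact absurd rfl ((hdisj hji).ne_of_mem (hmem (hPF i hx) hxj) hx)

theorem Homeomorph.exists_image_eq_of_partition (f : X ≃ₜ X) {ι : Type*} {F : Set X}
    (hF : f '' F = F) {P U : ι → Set X} (hU : ∀ i, IsOpen (U i)) (hFU : ∀ i, F ∩ U i = P i)
    (hcover : F ⊆ ⋃ i, P i) (hdisj : Pairwise (Disjoint on P))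
    (hpre : ∀ i, IsPreconnected (P i)) (hne : ∀ i, (P i).Nonempty) (i : ι) :
    ∃ j, f '' P i = P j := by
  obtain ⟨x, hx⟩ := hne i
  have hxF : x ∈ F := (hFU i ▸ hx : x ∈ F ∩ U i).1
  obtain ⟨j, hj⟩ := mem_iUnion.1 (hcover (hF ▸ mem_image_of_mem f hxF))
  refine ⟨j, ?_⟩
  rw [← connectedComponentIn_eq_of_partition hU hFU hcover hdisj hpre hx,
    f.image_connectedComponentIn hxF, hF,
    connectedComponentIn_eq_of_partition hU hFU hcover hdisj hpre hj]

lemma isPreconnected_union_image_Icc_sdiff {E : Type*} [TopologicalSpace E] {γ : ℝ → E}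
    (hγ : Continuous γ) (hinj : Injective γ) {D : Set E} (hD : IsPreconnected D) {a b : ℝ}
    (hab : a ≤ b) (ha : γ a ∈ D) (hb : γ b ∈ D) {x : E} (hx : x ∉ D) :
    IsPreconnected (D ∪ (γ '' Icc a b \ {x})) := by
  by_cases hxγ : x ∈ γ '' Icc a b
  · obtain ⟨s, hs, rfl⟩ := hxγ
    have has : a < s := hs.1.lt_of_ne (by rintro rfl; exact hx ha)
    have hsb : s < b := hs.2.lt_of_ne (by rintro rfl; exact hx hb)
    have hsplit : Icc a b \ {s} = Ico a s ∪ Ioc s b := by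
      ext t
      simp only [Set.mem_sdiff, mem_Icc, mem_singleton_iff, mem_union, mem_Ico, mem_Ioc]
      grind
    rw [← image_singleton, ← image_sdiff hinj, hsplit, image_union, ← union_assoc]
    exact (hD.union _ ha (mem_image_of_mem γ (left_mem_Ico.2 has))
      (isPreconnected_Ico.image _ hγ.continuousOn)).union _ (Or.inl hb)
      (mem_image_of_mem γ (right_mem_Ioc.2 hsb)) (isPreconnected_Ioc.image _ hγ.continuousOn)
  · rw [sdiff_singleton_eq_self hxγ]
    exact hD.union _ ha (mem_image_of_mem γ (left_mem_Icc.2 hab))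
      (isPreconnected_Icc.image _ hγ.continuousOn)

end General

lemma preimage_val_pair {E : Type*} {s : Set E} {a b : E} (ha : a ∈ s) (hb : b ∈ s) :
    ((↑) ⁻¹' {a, b} : Set s) = {⟨a, ha⟩, ⟨b, hb⟩} := by
  ext x
  simp [Subtype.ext_iff]

section Subspace

variable {E : Type*} [TopologicalSpace E] {s : Set E}

lemma isPreconnected_preimage_val {S : Set E} (hS : S ⊆ s) :
    IsPreconnected ((↑) ⁻¹' S : Set s) ↔ IsPreconnected S := by
  rw [← IsInducing.subtypeVal.isPreconnected_image,
    image_preimage_eq_of_subset (by rwa [Subtype.range_coe])]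

lemma closure_preimage_val {S : Set E} (hS : S ⊆ s) :
    closure ((↑) ⁻¹' S : Set s) = (↑) ⁻¹' closure S := by
  rw [IsInducing.subtypeVal.closure_eq_preimage_closure_image,
    image_preimage_eq_of_subset (by rwa [Subtype.range_coe])]

lemma mem_closure_preimage_val_sdiff {S : Set E} (hS : S ⊆ s) (x : s) :
    x ∈ closure ((↑) ⁻¹' S \ {x}) ↔ (x : E) ∈ closure (S \ {(x : E)}) := by
  have h : ((↑) ⁻¹' S \ {x} : Set s) = (↑) ⁻¹' (S \ {(x : E)}) := by
    ext y
    simp [Subtype.ext_iff]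
  rw [h, closure_preimage_val (sdiff_subset.trans hS)]
  rfl

lemma mem_cutPoints_subtype {x : s} : x ∈ cutPoints s ↔ ¬IsPreconnected (s \ {(x : E)}) := by
  have h : ((↑) ⁻¹' (s \ {(x : E)}) : Set s) = {x}ᶜ := by
    ext y
    simp [Subtype.ext_iff]
  rw [← isPreconnected_preimage_val sdiff_subset, h]
  rfl

theorem Homeomorph.exists_image_preimage_val_eq_of_partition (f : s ≃ₜ s) {ι : Type*}
    {F : Set E} (hFs : F ⊆ s) (hF : f '' ((↑) ⁻¹' F) = (↑) ⁻¹' F) {P U : ι → Set E}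
    (hU : ∀ i, IsOpen (U i)) (hFU : ∀ i, F ∩ U i = P i) (hcover : F ⊆ ⋃ i, P i)
    (hdisj : Pairwise (Disjoint on P)) (hpre : ∀ i, IsPreconnected (P i))
    (hne : ∀ i, (P i).Nonempty) (i : ι) : ∃ j, f '' ((↑) ⁻¹' P i) = (↑) ⁻¹' P j := by
  have hPs : ∀ i, P i ⊆ s := fun i => hFU i ▸ inter_subset_left.trans hFs
  refine f.exists_image_eq_of_partition hF (fun i => (hU i).preimage continuous_subtype_val)
    (fun i => by rw [← preimage_inter, hFU]) (by rw [← preimage_iUnion]; exact preimage_mono hcover)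
    (fun i j h => (hdisj h).preimage _) (fun i => (isPreconnected_preimage_val (hPs i)).2 (hpre i))
    (fun i => ?_) i
  obtain ⟨p, hp⟩ := hne i
  exact ⟨⟨p, hPs i hp⟩, hp⟩

end Subspace

namespace Y

noncomputable section

def base (n : ℕ) : ℝ := -1 + 2 / ((n : ℝ) + 1)

def height (n : ℕ) : ℝ := 1 / ((n : ℝ) + 1)

def gap (n : ℕ) : ℝ := base n - base (n + 1)

lemma base_eq (n : ℕ) : base n = -1 + 2 * height n := by
  simp only [base, height]; ring

lemma height_pos (n : ℕ) : 0 < height n := by unfold height; positivity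

lemma height_strictAnti : StrictAnti height := fun m n h => by
  unfold height
  gcongr

lemma base_strictAnti : StrictAnti base := fun m n h => by
  have := height_strictAnti h
  rw [base_eq, base_eq]
  linarith

lemma base_zero : base 0 = 1 := by norm_num [base]

lemma base_succ (n : ℕ) : base (n + 1) = -1 + 2 / ((n : ℝ) + 2) := by
  simp only [base]; push_cast; ring

lemma neg_one_lt_base (n : ℕ) : -1 < base n := by
  rw [base_eq]; linarith [height_pos n]

lemma base_le_one (n : ℕ) : base n ≤ 1 :=
  base_zero ▸ base_strictAnti.antitone n.zero_le

lemma tendsto_height : Tendsto height atTop (𝓝 0) :=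
  tendsto_one_div_add_atTop_nhds_zero_nat

lemma tendsto_base : Tendsto base atTop (𝓝 (-1)) := by
  simpa only [mul_zero, add_zero, ← base_eq] using (tendsto_height.const_mul 2).const_add (-1)

lemma gap_pos (n : ℕ) : 0 < gap n := sub_pos.2 (base_strictAnti n.lt_succ_self)

lemma gap_antitone : Antitone gap := fun m n h => by
  have hgap : ∀ k : ℕ, gap k = 2 / (((k : ℝ) + 1) * ((k : ℝ) + 2)) := fun k => by
    rw [gap, base_succ, base]; field_simp; ring
  rw [hgap, hgap]
  gcongr

lemma gap_le_base_sub {m n : ℕ} (h : n < m) : gap n ≤ base n - base m := by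
  have := base_strictAnti.antitone (Nat.succ_le_of_lt h)
  unfold gap
  linarith

lemma gap_le_abs_base_sub {m n : ℕ} (h : m ≠ n) : gap n ≤ |base m - base n| := by
  rcases h.lt_or_gt with h | h
  · calc gap n ≤ gap m := gap_antitone h.le
      _ ≤ base m - base n := gap_le_base_sub h
      _ ≤ |base m - base n| := le_abs_self _
  · rw [abs_sub_comm]
    exact (gap_le_base_sub h).trans (le_abs_self _)

lemma eq_of_abs_base_sub_lt {m n : ℕ} (h : |base m - base n| < gap n) : m = n := by
  by_contra hmn
  exact (gap_le_abs_base_sub hmn).not_gt h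

lemma base_notMem_Ioo (m n : ℕ) : base m ∉ Ioo (base (n + 1)) (base n) := fun h => by
  have h1 := base_strictAnti.lt_iff_gt.1 h.1
  have h2 := base_strictAnti.lt_iff_gt.1 h.2
  omega

lemma eq_or_succ_eq_of_base_mem_Icc {m n : ℕ} (h : base n ∈ Icc (base (m + 1)) (base m)) :
    m = n ∨ m + 1 = n := by
  have h1 := base_strictAnti.le_iff_ge.1 h.1
  have h2 := base_strictAnti.le_iff_ge.1 h.2
  omega

lemma exists_base_succ_lt_le {t : ℝ} (h1 : -1 < t) (h2 : t ≤ 1) :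
    ∃ n, base (n + 1) < t ∧ t ≤ base n := by
  classical
  have hex : ∃ m, base m < t := (tendsto_base.eventually_lt_const h1).exists
  obtain ⟨n, hn⟩ : ∃ n, Nat.find hex = n + 1 :=
    Nat.exists_eq_succ_of_ne_zero fun h0 => by
      have := Nat.find_spec hex
      rw [h0, base_zero] at this
      linarith
  refine ⟨n, hn ▸ Nat.find_spec hex, not_lt.1 (Nat.find_min hex (by omega))⟩

def pLeft : ℝ × ℝ := (-1, 0)

def branch (n : ℕ) : ℝ × ℝ := (base n, 0)

def tip (n : ℕ) : ℝ × ℝ := (base n, height n)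

def horiz : Set (ℝ × ℝ) := Icc (-1) 1 ×ˢ {0}

def loop : Set (ℝ × ℝ) := arcC ∪ horiz

def stem (n : ℕ) : Set (ℝ × ℝ) := {base n} ×ˢ Ico 0 (height n)

def comb : Set (ℝ × ℝ) := insert pLeft (⋃ n, arcV n)

def ends : Set (ℝ × ℝ) := insert pLeft (range tip)

def tube (n : ℕ) : Set (ℝ × ℝ) := {p | |p.1 - base n| < gap n}

lemma Y_eq : Y = loop ∪ ⋃ n, arcV n := rfl

lemma arcV_eq (n : ℕ) : arcV n = {base n} ×ˢ Icc 0 (height n) := rfl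

lemma arcV_subset_Y (n : ℕ) : arcV n ⊆ Y := fun _ hp => Or.inr (mem_iUnion_of_mem n hp)

lemma loop_subset_Y : loop ⊆ Y := subset_union_left

lemma horiz_subset_Y : horiz ⊆ Y := subset_union_right.trans loop_subset_Y

lemma arcC_subset_Y : arcC ⊆ Y := subset_union_left.trans loop_subset_Y

lemma branch_zero : branch 0 = (1, 0) := by rw [branch, base_zero]

lemma pLeft_mem_arcC : pLeft ∈ arcC := by norm_num [arcC, pLeft]

lemma pLeft_mem_horiz : pLeft ∈ horiz := by norm_num [horiz, pLeft]

lemma one_zero_mem_arcC : ((1 : ℝ), (0 : ℝ)) ∈ arcC := by norm_num [arcC]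

lemma branch_mem_horiz (n : ℕ) : branch n ∈ horiz :=
  ⟨⟨(neg_one_lt_base n).le, base_le_one n⟩, rfl⟩

lemma branch_mem_stem (n : ℕ) : branch n ∈ stem n := ⟨rfl, le_rfl, height_pos n⟩

lemma stem_subset_arcV (n : ℕ) : stem n ⊆ arcV n := prod_mono le_rfl Ico_subset_Icc_self

lemma arcV_eq_insert_tip (n : ℕ) : arcV n = insert (tip n) (stem n) := by
  rw [arcV_eq, stem, ← Ico_insert_right (height_pos n).le, singleton_prod, singleton_prod,
    image_insert_eq]
  rfl

lemma tip_notMem_stem (m n : ℕ) : tip n ∉ stem m := fun h => by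
  obtain rfl := base_strictAnti.injective h.1
  exact h.2.2.false

lemma tip_mem_arcV (n : ℕ) : tip n ∈ arcV n := arcV_eq_insert_tip n ▸ mem_insert _ _

lemma mem_loop_of_snd_nonpos {p : ℝ × ℝ} (hp : p ∈ Y) (h : p.2 ≤ 0) : p ∈ loop := by
  rcases hp with hp | hp
  · exact hp
  · obtain ⟨n, hn⟩ := mem_iUnion.1 hp
    have hp0 : p.2 = 0 := le_antisymm h hn.2.1
    exact Or.inr ⟨⟨(neg_one_lt_base n).le.trans_eq hn.1.symm, hn.1.trans_le (base_le_one n)⟩,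
      hp0⟩

lemma mem_arcC_of_snd_neg {p : ℝ × ℝ} (hp : p ∈ Y) (h : p.2 < 0) : p ∈ arcC := by
  rcases mem_loop_of_snd_nonpos hp h.le with hp | hp
  · exact hp
  · exact absurd hp.2 h.ne

lemma exists_mem_arcV_of_snd_pos {p : ℝ × ℝ} (hp : p ∈ Y) (h : 0 < p.2) :
    ∃ n, p ∈ arcV n := by
  rcases hp with (hp | hp) | hp
  · exact absurd hp.2 h.not_ge
  · exact absurd hp.2 h.ne'
  · exact mem_iUnion.1 hp

lemma eq_of_mem_arcV_of_mem_tube {m n : ℕ} {p : ℝ × ℝ} (hm : p ∈ arcV m) (hn : p ∈ tube n) :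
    m = n := by
  have hp : p.1 = base m := hm.1
  exact eq_of_abs_base_sub_lt (hp ▸ hn)

lemma isOpen_tube (n : ℕ) : IsOpen (tube n) := isOpen_lt (by fun_prop) continuous_const

lemma mem_tube_of_fst_eq {n : ℕ} {p : ℝ × ℝ} (h : p.1 = base n) : p ∈ tube n := by
  simp only [tube, mem_ofPred_eq, h, sub_self, abs_zero, gap_pos]

lemma eq_pLeft_or_of_mem_arcC {p : ℝ × ℝ} (hC : p ∈ arcC) (h0 : p.2 = 0) :
    p = pLeft ∨ p = (1, 0) := by
  have hp := hC.1
  rw [h0] at hp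
  have : (p.1 + 1) * (p.1 - 1) = 0 := by nlinarith
  rcases mul_eq_zero.1 this with h | h
  · exact Or.inl (Prod.ext (by simp [pLeft]; linarith) h0)
  · exact Or.inr (Prod.ext (by simp; linarith) h0)

/-! ### Cut points of `Y` -/

def lowerArc (t : ℝ) : ℝ × ℝ := (t, -√(1 - t ^ 2))

lemma continuous_lowerArc : Continuous lowerArc := by unfold lowerArc; fun_prop

lemma lowerArc_injective : Injective lowerArc := fun _ _ h => congrArg Prod.fst h

lemma arcC_eq_image : arcC = lowerArc '' Icc (-1) 1 := by
  ext p
  constructor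
  · rintro ⟨hp, hp2⟩
    have h1 : p.1 ^ 2 ≤ 1 := by nlinarith
    refine ⟨p.1, ⟨by nlinarith, by nlinarith⟩, Prod.ext rfl ?_⟩
    simp only [lowerArc]
    rw [show 1 - p.1 ^ 2 = p.2 ^ 2 by linarith, Real.sqrt_sq_eq_abs, abs_of_nonpos hp2, neg_neg]
  · rintro ⟨t, ht, rfl⟩
    have h1 : 0 ≤ 1 - t ^ 2 := by nlinarith [ht.1, ht.2]
    refine ⟨?_, neg_nonpos.2 (Real.sqrt_nonneg _)⟩
    simp only [lowerArc, neg_sq, Real.sq_sqrt h1]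
    ring

lemma horiz_eq_image : horiz = (·, (0 : ℝ)) '' Icc (-1) 1 := prod_singleton

lemma isPreconnected_arcC : IsPreconnected arcC :=
  arcC_eq_image ▸ isPreconnected_Icc.image _ continuous_lowerArc.continuousOn

lemma isPreconnected_horiz : IsPreconnected horiz :=
  isPreconnected_Icc.prod isPreconnected_singleton

lemma isPreconnected_stem (n : ℕ) : IsPreconnected (stem n) :=
  isPreconnected_singleton.prod isPreconnected_Ico

lemma isPreconnected_arcV (n : ℕ) : IsPreconnected (arcV n) :=
  isPreconnected_singleton.prod isPreconnected_Icc

lemma isPreconnected_loop_sdiff {x : ℝ × ℝ} (hx : x ≠ (1, 0)) : IsPreconnected (loop \ {x}) := by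
  rw [loop, union_sdiff_distrib]
  by_cases hxC : x ∈ arcC
  · by_cases hxH : x ∈ horiz
    · obtain rfl := (eq_pLeft_or_of_mem_arcC hxC hxH.2).resolve_right hx
      have hC : arcC \ {pLeft} = lowerArc '' Ioc (-1) 1 := by
        rw [arcC_eq_image, show pLeft = lowerArc (-1) by norm_num [pLeft, lowerArc],
          ← image_singleton, ← image_sdiff lowerArc_injective, Icc_sdiff_left]
      have hH : horiz \ {pLeft} = Ioc (-1) 1 ×ˢ {0} := by
        rw [horiz, pLeft, ← singleton_prod_singleton, prod_sdiff_prod]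
        simp [Icc_sdiff_left]
      rw [hC, hH]
      refine (isPreconnected_Ioc.image _ continuous_lowerArc.continuousOn).union (1, 0)
        ⟨1, by norm_num, by norm_num [lowerArc]⟩ ⟨by norm_num, rfl⟩
        (isPreconnected_Ioc.prod isPreconnected_singleton)
    · rw [sdiff_singleton_eq_self hxH, union_comm, arcC_eq_image]
      exact isPreconnected_union_image_Icc_sdiff continuous_lowerArc lowerArc_injective
        isPreconnected_horiz (by norm_num) (by norm_num [horiz, lowerArc])
        (by norm_num [horiz, lowerArc]) hxH
  · rw [sdiff_singleton_eq_self hxC, horiz_eq_image]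
    exact isPreconnected_union_image_Icc_sdiff (γ := (·, 0)) (by fun_prop)
      (fun _ _ h => congrArg Prod.fst h)
      isPreconnected_arcC (by norm_num) pLeft_mem_arcC one_zero_mem_arcC hxC

def cutSet : Set (ℝ × ℝ) := ⋃ n, stem n

lemma pLeft_mem_Y : pLeft ∈ Y := horiz_subset_Y pLeft_mem_horiz

lemma pLeft_notMem_arcV (n : ℕ) : pLeft ∉ arcV n := fun h =>
  (neg_one_lt_base n).ne (h.1 : (-1 : ℝ) = base n)

lemma isPreconnected_Y_sdiff {x : ℝ × ℝ} (hx : x ∉ cutSet) : IsPreconnected (Y \ {x}) := by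
  simp only [cutSet, mem_iUnion, not_exists] at hx
  have h10 : x ≠ (1, 0) := fun h => hx 0 (h ▸ branch_zero ▸ branch_mem_stem 0)
  have hV : ∀ n, IsPreconnected (arcV n \ {x}) := fun n => by
    by_cases hxV : x ∈ arcV n
    · obtain rfl : x = tip n := (arcV_eq_insert_tip n ▸ hxV).resolve_right (hx n)
      rw [arcV_eq_insert_tip, insert_sdiff_self_of_notMem (tip_notMem_stem n n)]
      exact isPreconnected_stem n
    · rw [sdiff_singleton_eq_self hxV]
      exact isPreconnected_arcV n
  rw [Y_eq, union_sdiff_distrib, iUnion_sdiff, union_iUnion]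
  refine isPreconnected_iUnion
    ⟨(1, 0), mem_iInter.2 fun n => Or.inl ⟨Or.inl one_zero_mem_arcC, h10.symm⟩⟩ fun n => ?_
  have hb : branch n ≠ x := fun h => hx n (h ▸ branch_mem_stem n)
  exact (isPreconnected_loop_sdiff h10).union (branch n) ⟨Or.inr (branch_mem_horiz n), hb⟩
    ⟨stem_subset_arcV n (branch_mem_stem n), hb⟩ (hV n)

/-- Above a point of a stem, the rest of that vertical segment is cut off from `pLeft`. -/
lemma not_isPreconnected_Y_sdiff {n : ℕ} {x : ℝ × ℝ} (hx : x ∈ stem n) :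
    ¬IsPreconnected (Y \ {x}) := by
  obtain ⟨hx1 : x.1 = base n, hx2, hx3⟩ := hx
  set U : Set (ℝ × ℝ) := {p | x.2 < p.2} ∩ tube n
  set V : Set (ℝ × ℝ) := {p | p.1 ≠ base n} ∪ {p | p.2 < x.2}
  have hU : IsOpen U := (isOpen_lt continuous_const continuous_snd).inter (isOpen_tube n)
  have hV : IsOpen V :=
    (isOpen_ne_fun continuous_fst continuous_const).union
      (isOpen_lt continuous_snd continuous_const)
  have hcover : Y \ {x} ⊆ U ∪ V := by
    rintro p ⟨-, hpx⟩
    by_cases hp1 : p.1 = base n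
    · rcases lt_trichotomy p.2 x.2 with h | h | h
      · exact Or.inr (Or.inr h)
      · exact absurd (Prod.ext (hp1.trans hx1.symm) h) hpx
      · exact Or.inl ⟨h, mem_tube_of_fst_eq hp1⟩
    · exact Or.inr (Or.inl hp1)
  have htip : tip n ∈ (Y \ {x}) ∩ U :=
    ⟨⟨arcV_subset_Y n (tip_mem_arcV n), fun h => hx3.ne (congrArg Prod.snd h).symm⟩, hx3,
      mem_tube_of_fst_eq rfl⟩
  have hpLeft : pLeft ∈ (Y \ {x}) ∩ V :=
    ⟨⟨pLeft_mem_Y, fun h => (neg_one_lt_base n).ne (hx1 ▸ congrArg Prod.fst h)⟩,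
      Or.inl (neg_one_lt_base n).ne⟩
  intro hpre
  obtain ⟨p, ⟨hpY, -⟩, ⟨hpU : x.2 < p.2, hpn⟩, hpV⟩ :=
    hpre U V hU hV hcover ⟨_, htip⟩ ⟨_, hpLeft⟩
  obtain ⟨m, hm⟩ := exists_mem_arcV_of_snd_pos hpY (hx2.trans_lt hpU)
  obtain rfl := eq_of_mem_arcV_of_mem_tube hm hpn
  rcases hpV with h | h
  · exact h hm.1
  · exact h.not_gt hpU

/-! ### The closure of the cut points -/

lemma isClosed_arcV (n : ℕ) : IsClosed (arcV n) := isClosed_singleton.prod isClosed_Icc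

/-- Beyond the first `N` segments, `comb` lies in the wedge `0 ≤ y ≤ (x + 1) / 2` to the left of
`base N`, and these wedges shrink to `pLeft`. -/
lemma isClosed_comb : IsClosed comb := by
  set W : ℕ → Set (ℝ × ℝ) := fun N => {p | p.1 ≤ base N ∧ 0 ≤ p.2 ∧ p.2 ≤ (p.1 + 1) / 2}
  have hW : ∀ N, IsClosed (W N) := fun N =>
    (isClosed_le continuous_fst continuous_const).inter
      ((isClosed_le continuous_const continuous_snd).inter
        (isClosed_le continuous_snd (by fun_prop)))
  have heq : comb = ⋂ N, (⋃ n ∈ Iio N, arcV n) ∪ W N := by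
    ext p
    simp only [comb, mem_insert_iff, mem_iUnion, mem_iInter, mem_union, exists_prop, mem_Iio]
    constructor
    · rintro (rfl | ⟨n, hn⟩) N
      · exact Or.inr ⟨(neg_one_lt_base N).le, le_rfl, by norm_num [pLeft]⟩
      · by_cases hnN : n < N
        · exact Or.inl ⟨n, hnN, hn⟩
        · refine Or.inr ⟨hn.1.trans_le (base_strictAnti.antitone (not_lt.1 hnN)), hn.2.1, ?_⟩
          rw [show p.1 = base n from hn.1, base_eq]
          linarith [hn.2.2, (show height n = 1 / ((n : ℝ) + 1) from rfl)]
    · intro h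
      by_contra hp
      simp only [not_or, not_exists] at hp
      have hW' : ∀ N, p ∈ W N := fun N => (h N).resolve_left fun ⟨n, _, hn⟩ => hp.2 n hn
      have h1 : p.1 ≤ -1 := ge_of_tendsto' tendsto_base fun N => (hW' N).1
      have h2 : p.2 = 0 := le_antisymm (by linarith [(hW' 0).2.2]) (hW' 0).2.1
      exact hp.1 (Prod.ext (show p.1 = -1 by linarith [(hW' 0).2.2]) h2)
  rw [heq]
  exact isClosed_iInter fun N =>
    ((finite_Iio N).isClosed_biUnion fun n _ => isClosed_arcV n).union (hW N)

lemma cutSet_subset_comb : cutSet ⊆ comb :=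
  (iUnion_mono stem_subset_arcV).trans (subset_insert _ _)

lemma tendsto_branch : Tendsto branch atTop (𝓝 pLeft) :=
  tendsto_base.prodMk_nhds tendsto_const_nhds

lemma tendsto_tip : Tendsto tip atTop (𝓝 pLeft) := tendsto_base.prodMk_nhds tendsto_height

lemma closure_stem (n : ℕ) : closure (stem n) = arcV n := by
  rw [stem, closure_prod_eq, closure_singleton, closure_Ico (height_pos n).ne]
  rfl

lemma closure_cutSet : closure cutSet = comb := by
  refine subset_antisymm (closure_minimal cutSet_subset_comb isClosed_comb) ?_
  rintro p (rfl | hp)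
  · exact mem_closure_of_tendsto tendsto_branch
      (Eventually.of_forall fun n => mem_iUnion_of_mem n (branch_mem_stem n))
  · obtain ⟨n, hn⟩ := mem_iUnion.1 hp
    exact closure_mono (subset_iUnion stem n) (closure_stem n ▸ hn)

lemma comb_sdiff_cutSet : comb \ cutSet = ends := by
  ext p
  simp only [comb, ends, cutSet, Set.mem_sdiff, mem_insert_iff, mem_iUnion, mem_range, not_exists]
  constructor
  · rintro ⟨rfl | ⟨n, hn⟩, hp⟩
    · exact Or.inl rfl
    · exact Or.inr ⟨n, ((arcV_eq_insert_tip n ▸ hn).resolve_right (hp n)).symm⟩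
  · rintro (rfl | ⟨n, rfl⟩)
    · exact ⟨Or.inl rfl, fun m h => pLeft_notMem_arcV m (stem_subset_arcV m h)⟩
    · exact ⟨Or.inr ⟨n, tip_mem_arcV n⟩, fun m => tip_notMem_stem m n⟩

lemma tip_ne_pLeft (n : ℕ) : tip n ≠ pLeft := fun h => pLeft_notMem_arcV n (h ▸ tip_mem_arcV n)

lemma pLeft_mem_closure_ends_sdiff : pLeft ∈ closure (ends \ {pLeft}) :=
  mem_closure_of_tendsto tendsto_tip
    (Eventually.of_forall fun n => ⟨Or.inr ⟨n, rfl⟩, tip_ne_pLeft n⟩)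

lemma eq_pLeft_of_mem_closure_ends_sdiff {p : ℝ × ℝ} (hp : p ∈ ends)
    (hacc : p ∈ closure (ends \ {p})) : p = pLeft := by
  obtain rfl | ⟨n, rfl⟩ := hp
  · rfl
  obtain ⟨q, ⟨hq2, hqn⟩, hqE, hqne⟩ := mem_closure_iff.1 hacc ({q | 0 < q.2} ∩ tube n)
    ((isOpen_lt continuous_const continuous_snd).inter (isOpen_tube n))
    ⟨height_pos n, mem_tube_of_fst_eq rfl⟩
  obtain rfl | ⟨m, rfl⟩ := hqE
  · exact absurd hq2 (lt_irrefl (0 : ℝ))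
  · obtain rfl := eq_of_mem_arcV_of_mem_tube (tip_mem_arcV m) hqn
    exact absurd rfl hqne

/-! ### Components of `Y \ comb` and of `comb \ {pLeft}` -/

/-- The components of `Y \ comb`. -/
def piece : ℕ → Set (ℝ × ℝ)
  | 0 => {p | p ∈ arcC ∧ p.2 < 0}
  | n + 1 => Ioo (base (n + 1)) (base n) ×ˢ {0}

def pieceNbhd : ℕ → Set (ℝ × ℝ)
  | 0 => {p | p.2 < 0}
  | n + 1 => {p | p.1 ∈ Ioo (base (n + 1)) (base n) ∧ p.1 ^ 2 + p.2 ^ 2 < 1}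

lemma snd_nonneg_of_mem_comb {p : ℝ × ℝ} (hp : p ∈ comb) : 0 ≤ p.2 := by
  obtain rfl | hp := hp
  · exact le_rfl
  · obtain ⟨n, hn⟩ := mem_iUnion.1 hp
    exact hn.2.1

lemma branch_mem_comb (n : ℕ) : branch n ∈ comb :=
  Or.inr (mem_iUnion_of_mem n (stem_subset_arcV n (branch_mem_stem n)))

lemma isOpen_pieceNbhd : ∀ k, IsOpen (pieceNbhd k)
  | 0 => isOpen_lt continuous_snd continuous_const
  | _ + 1 => (isOpen_Ioo.preimage continuous_fst).inter
      (isOpen_lt ((continuous_fst.pow 2).add (continuous_snd.pow 2)) continuous_const)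

lemma Y_sdiff_comb_inter_pieceNbhd : ∀ k, (Y \ comb) ∩ pieceNbhd k = piece k
  | 0 => by
    ext p
    refine ⟨fun ⟨⟨hpY, _⟩, hp2⟩ => ⟨mem_arcC_of_snd_neg hpY hp2, hp2⟩, fun ⟨hpC, hp2⟩ =>
      ⟨⟨arcC_subset_Y hpC, fun h => (snd_nonneg_of_mem_comb h).not_gt hp2⟩, hp2⟩⟩
  | n + 1 => by
    ext p
    constructor
    · rintro ⟨⟨(hpC | hpH) | hpV, hpc⟩, hp1, hpr⟩
      · exact absurd hpC.1 hpr.ne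
      · exact ⟨hp1, hpH.2⟩
      · exact absurd (Or.inr hpV) hpc
    · rintro ⟨hp1, hp2 : p.2 = 0⟩
      have hl : -1 < p.1 := (neg_one_lt_base (n + 1)).trans hp1.1
      have hr : p.1 < 1 := hp1.2.trans_le (base_le_one n)
      refine ⟨⟨horiz_subset_Y ⟨⟨hl.le, hr.le⟩, hp2⟩, ?_⟩, hp1, by rw [hp2]; nlinarith⟩
      rintro (rfl | hpV)
      · exact hl.ne rfl
      · obtain ⟨m, hm⟩ := mem_iUnion.1 hpV
        exact base_notMem_Ioo m n ((show p.1 = base m from hm.1) ▸ hp1)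

lemma piece_subset_Y (k : ℕ) : piece k ⊆ Y :=
  Y_sdiff_comb_inter_pieceNbhd k ▸ inter_subset_left.trans sdiff_subset

lemma Y_sdiff_comb_subset : Y \ comb ⊆ ⋃ k, piece k := by
  rintro p ⟨hpY, hpc⟩
  rcases lt_trichotomy p.2 0 with hp2 | hp2 | hp2
  · exact mem_iUnion_of_mem 0 ⟨mem_arcC_of_snd_neg hpY hp2, hp2⟩
  · rcases mem_loop_of_snd_nonpos hpY hp2.le with hpC | hpH
    · rcases eq_pLeft_or_of_mem_arcC hpC hp2 with rfl | rfl
      · exact absurd (mem_insert _ _) hpc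
      · exact absurd (branch_zero ▸ branch_mem_comb 0) hpc
    · have hl : -1 < p.1 := hpH.1.1.lt_of_ne fun h => hpc (Or.inl (Prod.ext h.symm hp2))
      obtain ⟨n, hn1, hn2⟩ := exists_base_succ_lt_le hl hpH.1.2
      have hn : p.1 < base n := hn2.lt_of_ne fun h =>
        hpc ((Prod.ext h hp2 : p = branch n) ▸ branch_mem_comb n)
      exact mem_iUnion_of_mem (n + 1) ⟨⟨hn1, hn⟩, hp2⟩
  · obtain ⟨n, hn⟩ := exists_mem_arcV_of_snd_pos hpY hp2
    exact absurd (Or.inr (mem_iUnion_of_mem n hn)) hpc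

lemma pairwise_disjoint_piece : Pairwise (Disjoint on piece) := by
  have hsucc : ∀ m n, m < n → Disjoint (piece (m + 1)) (piece (n + 1)) := fun m n h =>
    disjoint_left.2 fun p hm hn =>
      (hn.1.2.trans_le (base_strictAnti.antitone (Nat.succ_le_of_lt h))).not_gt hm.1.1
  have hzero : ∀ n, Disjoint (piece 0) (piece (n + 1)) := fun n =>
    disjoint_left.2 fun p h0 hn => h0.2.ne hn.2
  rintro (_ | m) (_ | n) hmn
  · exact absurd rfl hmn
  · exact hzero n
  · exact (hzero m).symm
  · rcases lt_or_gt_of_ne (fun h => hmn (congrArg (· + 1) h)) with h | h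
    · exact hsucc m n h
    · exact (hsucc n m h).symm

lemma piece_zero_eq_image : piece 0 = lowerArc '' Ioo (-1) 1 := by
  ext p
  have hsqrt : ∀ t : ℝ, t ∈ Ioo (-1) 1 ↔ t ∈ Icc (-1) 1 ∧ (lowerArc t).2 < 0 := fun t => by
    simp only [lowerArc, mem_Ioo, mem_Icc, neg_lt_zero, Real.sqrt_pos, sub_pos,
      sq_lt_one_iff_abs_lt_one, abs_lt]
    constructor
    · rintro ⟨h1, h2⟩; exact ⟨⟨h1.le, h2.le⟩, h1, h2⟩
    · rintro ⟨-, h⟩; exact h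
  simp only [piece, arcC_eq_image, mem_image, hsqrt]
  constructor
  · rintro ⟨⟨t, ht, rfl⟩, h⟩
    exact ⟨t, ⟨ht, h⟩, rfl⟩
  · rintro ⟨t, ⟨ht, h⟩, rfl⟩
    exact ⟨⟨t, ht, rfl⟩, h⟩

lemma isPreconnected_piece : ∀ k, IsPreconnected (piece k)
  | 0 => piece_zero_eq_image ▸ isPreconnected_Ioo.image _ continuous_lowerArc.continuousOn
  | _ + 1 => isPreconnected_Ioo.prod isPreconnected_singleton

lemma piece_nonempty : ∀ k, (piece k).Nonempty
  | 0 => ⟨(0, -1), by norm_num [piece, arcC]⟩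
  | n + 1 => by
    have := base_strictAnti n.lt_succ_self
    exact ⟨((base (n + 1) + base n) / 2, 0), ⟨by linarith, by linarith⟩, rfl⟩

lemma isClosed_arcC : IsClosed arcC :=
  arcC_eq_image ▸ (isCompact_Icc.image continuous_lowerArc).isClosed

lemma arcH_eq (n : ℕ) : arcH n = Icc (base (n + 1)) (base n) ×ˢ {0} := by
  rw [base_succ]; rfl

lemma closure_piece_zero : closure (piece 0) = arcC := by
  refine subset_antisymm (closure_minimal (fun p hp => hp.1) isClosed_arcC) ?_
  rw [arcC_eq_image, piece_zero_eq_image, ← closure_Ioo (by norm_num : (-1 : ℝ) ≠ 1)]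
  exact image_closure_subset_closure_image continuous_lowerArc

lemma closure_piece_succ (n : ℕ) : closure (piece (n + 1)) = arcH n := by
  rw [arcH_eq, piece, closure_prod_eq, closure_Ioo (base_strictAnti n.lt_succ_self).ne,
    closure_singleton]

lemma closure_piece_zero_sdiff : closure (piece 0) \ piece 0 = {pLeft, branch 0} := by
  rw [closure_piece_zero, branch_zero]
  ext p
  constructor
  · rintro ⟨hpC, hp⟩
    exact eq_pLeft_or_of_mem_arcC hpC (le_antisymm hpC.2 (not_lt.1 fun h => hp ⟨hpC, h⟩))
  · rintro (rfl | rfl)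
    · exact ⟨pLeft_mem_arcC, fun h => (lt_irrefl (0 : ℝ)) h.2⟩
    · exact ⟨one_zero_mem_arcC, fun h => (lt_irrefl (0 : ℝ)) h.2⟩

lemma closure_piece_succ_sdiff (n : ℕ) :
    closure (piece (n + 1)) \ piece (n + 1) = {branch n, branch (n + 1)} := by
  rw [closure_piece_succ, arcH_eq, piece, prod_singleton, prod_singleton,
    ← image_sdiff fun _ _ h => congrArg Prod.fst h,
    Icc_sdiff_Ioo_same (base_strictAnti n.lt_succ_self).le, image_pair, pair_comm]
  rfl

lemma eq_zero_of_pLeft_mem_closure_piece : ∀ {k}, pLeft ∈ closure (piece k) → k = 0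
  | 0, _ => rfl
  | n + 1, h => by
    rw [closure_piece_succ, arcH_eq] at h
    exact absurd h.1.1 (neg_one_lt_base (n + 1)).not_ge

lemma eq_or_eq_succ_of_branch_mem_closure_piece {n : ℕ} :
    ∀ {k}, branch n ∈ closure (piece k) → k = n ∨ k = n + 1
  | 0, h => by
    rw [closure_piece_zero] at h
    rcases eq_pLeft_or_of_mem_arcC h rfl with h | h
    · exact absurd (congrArg Prod.fst h) (neg_one_lt_base n).ne'
    · exact Or.inl (base_strictAnti.injective ((congrArg Prod.fst h).trans base_zero.symm)).symm
  | m + 1, h => by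
    rw [closure_piece_succ, arcH_eq] at h
    rcases eq_or_succ_eq_of_base_mem_Icc h.1 with rfl | rfl
    · exact Or.inr rfl
    · exact Or.inl rfl

lemma comb_sdiff_inter_tube (n : ℕ) : (comb \ {pLeft}) ∩ tube n = arcV n := by
  ext p
  constructor
  · rintro ⟨⟨rfl | hp, hne⟩, ht⟩
    · exact absurd rfl hne
    · obtain ⟨m, hm⟩ := mem_iUnion.1 hp
      exact eq_of_mem_arcV_of_mem_tube hm ht ▸ hm
  · intro hp
    exact ⟨⟨Or.inr (mem_iUnion_of_mem n hp), fun h => pLeft_notMem_arcV n (h ▸ hp)⟩,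
      mem_tube_of_fst_eq hp.1⟩

lemma comb_sdiff_subset : comb \ {pLeft} ⊆ ⋃ n, arcV n := by
  rintro p ⟨rfl | hp, hne⟩
  · exact absurd rfl hne
  · exact hp

lemma pairwise_disjoint_arcV : Pairwise (Disjoint on arcV) := fun _ _ h =>
  disjoint_left.2 fun _ hm hn => h (base_strictAnti.injective (hm.1.symm.trans hn.1))

/-! ### Homeomorphisms of `Y` -/

lemma comb_subset_Y : comb ⊆ Y := insert_subset pLeft_mem_Y (iUnion_subset arcV_subset_Y)

lemma ends_subset_comb : ends ⊆ comb := comb_sdiff_cutSet ▸ sdiff_subset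

def pLeftY : Y := ⟨pLeft, pLeft_mem_Y⟩

def branchY (n : ℕ) : Y := ⟨branch n, horiz_subset_Y (branch_mem_horiz n)⟩

def tipY (n : ℕ) : Y := ⟨tip n, arcV_subset_Y n (tip_mem_arcV n)⟩

lemma cutPoints_eq : cutPoints Y = (↑) ⁻¹' cutSet := by
  ext x
  rw [mem_cutPoints_subtype, mem_preimage]
  exact ⟨fun h => not_not.1 (mt isPreconnected_Y_sdiff h), fun h => by
    obtain ⟨n, hn⟩ := mem_iUnion.1 h
    exact not_isPreconnected_Y_sdiff hn⟩

variable (f : Y ≃ₜ Y)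

lemma image_comb : f '' ((↑) ⁻¹' comb) = (↑) ⁻¹' comb := by
  rw [← closure_cutSet, ← closure_preimage_val (cutSet_subset_comb.trans comb_subset_Y),
    ← cutPoints_eq, f.image_closure, f.image_cutPoints]

lemma image_ends : f '' ((↑) ⁻¹' ends) = (↑) ⁻¹' ends := by
  rw [← comb_sdiff_cutSet, preimage_sdiff, image_sdiff f.injective, image_comb, ← cutPoints_eq,
    f.image_cutPoints]

lemma apply_pLeftY : f pLeftY = pLeftY := by
  have hcl := mem_closure_preimage_val_sdiff (ends_subset_comb.trans comb_subset_Y)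
  refine f.apply_eq_self_of_unique_accumulation (image_ends f) (mem_insert _ _)
    ((hcl _).2 pLeft_mem_closure_ends_sdiff) fun y hy hacc => ?_
  exact Subtype.ext (eq_pLeft_of_mem_closure_ends_sdiff hy ((hcl y).1 hacc))

lemma exists_image_piece (k : ℕ) : ∃ j, f '' ((↑) ⁻¹' piece k) = (↑) ⁻¹' piece j := by
  refine f.exists_image_preimage_val_eq_of_partition sdiff_subset ?_ isOpen_pieceNbhd
    Y_sdiff_comb_inter_pieceNbhd Y_sdiff_comb_subset pairwise_disjoint_piece isPreconnected_piece
    piece_nonempty k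
  rw [preimage_sdiff, Subtype.coe_preimage_self, ← compl_eq_univ_sdiff, image_compl_eq f.bijective,
    image_comb]

lemma exists_image_arcV (n : ℕ) : ∃ m, f '' ((↑) ⁻¹' arcV n) = (↑) ⁻¹' arcV m := by
  refine f.exists_image_preimage_val_eq_of_partition (sdiff_subset.trans comb_subset_Y) ?_
    isOpen_tube comb_sdiff_inter_tube comb_sdiff_subset pairwise_disjoint_arcV isPreconnected_arcV
    (fun n => ⟨tip n, tip_mem_arcV n⟩) n
  have h : ((↑) ⁻¹' {pLeft} : Set Y) = {pLeftY} := by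
    ext z
    simp [Subtype.ext_iff, pLeftY]
  rw [preimage_sdiff, h, image_sdiff f.injective, image_comb, image_singleton, apply_pLeftY]

lemma image_closure_piece {j k : ℕ} (h : f '' ((↑) ⁻¹' piece k) = (↑) ⁻¹' piece j) :
    f '' ((↑) ⁻¹' closure (piece k)) = (↑) ⁻¹' closure (piece j) := by
  rw [← closure_preimage_val (piece_subset_Y k), ← closure_preimage_val (piece_subset_Y j),
    f.image_closure, h]

lemma closure_sdiff_preimage_piece (k : ℕ) :
    closure ((↑) ⁻¹' piece k : Set Y) \ (↑) ⁻¹' piece k =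
      (↑) ⁻¹' (closure (piece k) \ piece k) := by
  rw [closure_preimage_val (piece_subset_Y k), preimage_sdiff]

lemma image_piece_zero : f '' ((↑) ⁻¹' piece 0) = (↑) ⁻¹' piece 0 := by
  obtain ⟨j, hj⟩ := exists_image_piece f 0
  have h : f pLeftY ∈ f '' ((↑) ⁻¹' closure (piece 0)) :=
    mem_image_of_mem f (show pLeft ∈ closure (piece 0) from closure_piece_zero ▸ pLeft_mem_arcC)
  rw [image_closure_piece f hj, apply_pLeftY] at h
  rwa [eq_zero_of_pLeft_mem_closure_piece h] at hj

lemma image_piece_and_apply_branchY (n : ℕ) :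
    f '' ((↑) ⁻¹' piece n) = (↑) ⁻¹' piece n ∧ f (branchY n) = branchY n := by
  induction n with
  | zero =>
    refine ⟨image_piece_zero f, f.apply_eq_self_of_closure_sdiff_eq_pair (image_piece_zero f) ?_
      (apply_pLeftY f)⟩
    rw [closure_sdiff_preimage_piece, closure_piece_zero_sdiff]
    exact preimage_val_pair _ _
  | succ n ih =>
    obtain ⟨j, hj⟩ := exists_image_piece f (n + 1)
    have hend : branch n ∈ closure (piece (n + 1)) \ piece (n + 1) := by
      rw [closure_piece_succ_sdiff]
      exact mem_insert _ _
    have hb : f (branchY n) ∈ f '' ((↑) ⁻¹' closure (piece (n + 1))) :=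
      mem_image_of_mem f (show branch n ∈ closure (piece (n + 1)) from hend.1)
    rw [image_closure_piece f hj, ih.2] at hb
    obtain rfl : j = n + 1 := by
      refine (eq_or_eq_succ_of_branch_mem_closure_piece hb).resolve_left ?_
      intro hjn
      rw [hjn, ← ih.1, image_eq_image f.injective] at hj
      obtain ⟨p, hp⟩ := piece_nonempty (n + 1)
      exact (pairwise_disjoint_piece n.succ_ne_self).ne_of_mem hp
        (show (⟨p, piece_subset_Y _ hp⟩ : Y) ∈ (↑) ⁻¹' piece n from hj ▸ hp) rfl
    refine ⟨hj, f.apply_eq_self_of_closure_sdiff_eq_pair hj ?_ ih.2⟩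
    rw [closure_sdiff_preimage_piece, closure_piece_succ_sdiff]
    exact preimage_val_pair _ _

lemma apply_branchY (n : ℕ) : f (branchY n) = branchY n := (image_piece_and_apply_branchY f n).2

lemma image_arcV (n : ℕ) : f '' ((↑) ⁻¹' arcV n) = (↑) ⁻¹' arcV n := by
  obtain ⟨m, hm⟩ := exists_image_arcV f n
  have h : f (branchY n) ∈ f '' ((↑) ⁻¹' arcV n) :=
    mem_image_of_mem f (stem_subset_arcV n (branch_mem_stem n))
  rw [hm, apply_branchY] at h
  obtain rfl : m = n := (base_strictAnti.injective (h.1 : base n = base m)).symm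
  exact hm

lemma ends_inter_arcV (n : ℕ) : ends ∩ arcV n = {tip n} := by
  refine subset_antisymm ?_ (singleton_subset_iff.2 ⟨Or.inr ⟨n, rfl⟩, tip_mem_arcV n⟩)
  rintro p ⟨rfl | ⟨m, rfl⟩, hp⟩
  · exact absurd hp (pLeft_notMem_arcV n)
  · rw [base_strictAnti.injective (hp.1 : base m = base n)]
    rfl

lemma apply_tipY (n : ℕ) : f (tipY n) = tipY n := by
  have h : f '' ((↑) ⁻¹' (ends ∩ arcV n)) = (↑) ⁻¹' (ends ∩ arcV n) := by
    rw [preimage_inter, image_inter f.injective, image_ends, image_arcV]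
  have hsingle : ((↑) ⁻¹' (ends ∩ arcV n) : Set Y) = {tipY n} := by
    ext z
    simp [ends_inter_arcV, Subtype.ext_iff, tipY]
  rwa [hsingle, image_singleton, singleton_eq_singleton_iff] at h

lemma image_arcs (n : ℕ) : f '' ((↑) ⁻¹' arcs n) = (↑) ⁻¹' arcs n := by
  unfold arcs
  split_ifs
  · rw [← closure_piece_zero]
    exact image_closure_piece f (image_piece_zero f)
  · exact image_arcV f _
  · rw [← closure_piece_succ]
    exact image_closure_piece f (image_piece_and_apply_branchY f _).1

end

end Y

/-- every homeomorphism of `Y` maps each arc of the natural decomposition of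
`Y` onto itself and fixes the endpoints of these arcs. -/
theorem stmt_13 (f : Y ≃ₜ Y) :
    (∀ n : ℕ, ∀ x : Y, (x : ℝ × ℝ) ∈ arcs n ↔ (f x : ℝ × ℝ) ∈ arcs n) ∧
    (∀ x : Y, (x : ℝ × ℝ) = (-1, 0) → f x = x) ∧
    (∀ x : Y, (x : ℝ × ℝ) = (1, 0) → f x = x) ∧
    (∀ n : ℕ, ∀ x : Y, (x : ℝ × ℝ) = (-1 + 2 / ((n : ℝ) + 1), 0) → f x = x) ∧
    (∀ n : ℕ, ∀ x : Y, (x : ℝ × ℝ) = (-1 + 2 / ((n : ℝ) + 1), 1 / ((n : ℝ) + 1)) → f x = x) := by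
  refine ⟨fun n x => ?_, fun x hx => ?_, fun x hx => ?_, fun n x hx => ?_, fun n x hx => ?_⟩
  · change x ∈ (↑) ⁻¹' arcs n ↔ f x ∈ (↑) ⁻¹' arcs n
    rw [← f.injective.mem_set_image, Y.image_arcs f n]
  · obtain rfl : x = Y.pLeftY := Subtype.ext hx
    exact Y.apply_pLeftY f
  · obtain rfl : x = Y.branchY 0 := Subtype.ext (hx.trans Y.branch_zero.symm)
    exact Y.apply_branchY f 0
  · obtain rfl : x = Y.branchY n := Subtype.ext hx
    exact Y.apply_branchY f n
  · obtain rfl : x = Y.tipY n := Subtype.ext hx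
    exact Y.apply_tipY f n
end
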